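/- arXiv:nlin/0601036 — 5 statements merged into one kernel-verified Lean document; each statement's English description precedes it below -/
import Mathlib

section
/- Let c1,...,c10 be real constants with c1 ≠ 0, c3 ≠ 0 and c5·c9 − c6·c8 ≠ 0, and let C denote the invertible 2×2 matrix [[c5, c6],[c8, c9]]. Let f, g, h, k : ℝ² → ℝ be smooth and let u, v : ℝ² → ℝ be smooth functions of (x,t) satisfying the diffusion system u_t = ∂_x[f(u,v)·u_x + g(u,v)·v_x], v_t = ∂_x[h(u,v)·u_x + k(u,v)·v_x] on ℝ². Define u', v' : ℝ² → ℝ by u'(x',t') = c5·u(x,t) + c6·v(x,t) + c7 and v'(x',t') = c8·u(x,t) + c9·v(x,t) + c10, where x = (x'−c2)/c1 and t = (t'−c4)/c3, and define F' : ℝ² → M₂(ℝ) by F'(c5α+c6β+c7, c8α+c9β+c10) = (c1²/c3) · C · [[f(α,β), g(α,β)],[h(α,β), k(α,β)]] · C⁻¹ for all (α,β) ∈ ℝ². Then (u',v') satisfies the system of the same form, u'_{t'} = ∂_{x'}[f'(u',v')·u'_{x'} + g'(u',v')·v'_{x'}], v'_{t'} = ∂_{x'}[h'(u',v')·u'_{x'}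 + k'(u',v')·v'_{x'}], where f', g', h', k' are the four entries of F'. In particular, f'(u',v') = c1²[c5(c9 f − c8 g) + c6(c9 h − c8 k)]/(c3(c5c9−c6c8)) evaluated at the corresponding (u,v), and similarly for g', h', k'. -/
open Matrix

/-- Partial derivative with respect to the first variable `x`. -/
noncomputable def pdx (f : ℝ × ℝ → ℝ) : ℝ × ℝ → ℝ :=
  fun p => deriv (fun x => f (x, p.2)) p.1

/-- Partial derivative with respect to the second variable `t`. -/
noncomputable def pdt (f : ℝ × ℝ → ℝ) : ℝ × ℝ → ℝ :=
  fun p => deriv (fun t => f (p.1, t)) p.2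

lemma hasDerivAt_slice_x (F : ℝ × ℝ → ℝ) (hF : Differentiable ℝ F) (a b : ℝ) :
    HasDerivAt (fun x => F (x, b)) (pdx F (a, b)) a := by
  have h1 : HasDerivAt (fun x : ℝ => (x, b)) ((1 : ℝ), (0 : ℝ)) a :=
    (hasDerivAt_id a).prodMk (hasDerivAt_const a b)
  have h2 := (hF (a, b)).hasFDerivAt.comp_hasDerivAt a h1
  have h3 : pdx F (a, b) = fderiv ℝ F (a, b) (1, 0) := by
    simp only [pdx]; exact h2.deriv
  rw [h3]; exact h2

lemma hasDerivAt_slice_t (F : ℝ × ℝ → ℝ) (hF : Differentiable ℝ F) (a b : ℝ) :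
    HasDerivAt (fun t => F (a, t)) (pdt F (a, b)) b := by
  have h1 : HasDerivAt (fun t : ℝ => (a, t)) ((0 : ℝ), (1 : ℝ)) b :=
    (hasDerivAt_const b a).prodMk (hasDerivAt_id b)
  have h2 := (hF (a, b)).hasFDerivAt.comp_hasDerivAt b h1
  have h3 : pdt F (a, b) = fderiv ℝ F (a, b) (0, 1) := by
    simp only [pdt]; exact h2.deriv
  rw [h3]; exact h2

lemma differentiable_pdx (F : ℝ × ℝ → ℝ) (hF : ContDiff ℝ (⊤ : ℕ∞) F) :
    Differentiable ℝ (pdx F) := by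
  have hd := hF.differentiable (by simp)
  have heq : pdx F = fun p => fderiv ℝ F p ((1 : ℝ), (0 : ℝ)) := by
    funext p
    have h1 : HasDerivAt (fun x : ℝ => (x, p.2)) ((1 : ℝ), (0 : ℝ)) p.1 :=
      (hasDerivAt_id _).prodMk (hasDerivAt_const _ _)
    have h2 := (hd p).hasFDerivAt.comp_hasDerivAt p.1 h1
    simpa [pdx, Function.comp_def] using h2.deriv
  rw [heq]
  exact ((hF.fderiv_right (m := 1) (WithTop.coe_le_coe.mpr (le_top : ((1 + 1 : ℕ) : ℕ∞) ≤ ⊤))).clm_apply contDiff_const).differentiable (by simp)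

lemma combo_x (A B : ℝ × ℝ → ℝ) (hA : Differentiable ℝ A) (hB : Differentiable ℝ B)
    (a5 a6 a7 d1 d2 d3 d4 : ℝ) (p : ℝ × ℝ) :
    HasDerivAt (fun x => a5 * A ((x - d2)/d1, (p.2 - d4)/d3)
        + a6 * B ((x - d2)/d1, (p.2 - d4)/d3) + a7)
      ((a5 * pdx A ((p.1 - d2)/d1, (p.2 - d4)/d3)
        + a6 * pdx B ((p.1 - d2)/d1, (p.2 - d4)/d3)) * (1/d1)) p.1 := by
  have hin : HasDerivAt (fun x : ℝ => (x - d2)/d1) (1/d1) p.1 :=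
    ((hasDerivAt_id p.1).sub_const d2).div_const d1
  have hA' := (hasDerivAt_slice_x A hA ((p.1 - d2)/d1) ((p.2 - d4)/d3)).comp p.1 hin
  have hB' := (hasDerivAt_slice_x B hB ((p.1 - d2)/d1) ((p.2 - d4)/d3)).comp p.1 hin
  have h := ((hA'.const_mul a5).add (hB'.const_mul a6)).add_const a7
  refine h.congr_deriv ?_
  ring

lemma combo_t (A B : ℝ × ℝ → ℝ) (hA : Differentiable ℝ A) (hB : Differentiable ℝ B)
    (a5 a6 a7 d1 d2 d3 d4 : ℝ) (p : ℝ × ℝ) :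
    HasDerivAt (fun t => a5 * A ((p.1 - d2)/d1, (t - d4)/d3)
        + a6 * B ((p.1 - d2)/d1, (t - d4)/d3) + a7)
      ((a5 * pdt A ((p.1 - d2)/d1, (p.2 - d4)/d3)
        + a6 * pdt B ((p.1 - d2)/d1, (p.2 - d4)/d3)) * (1/d3)) p.2 := by
  have hin : HasDerivAt (fun t : ℝ => (t - d4)/d3) (1/d3) p.2 :=
    ((hasDerivAt_id p.2).sub_const d4).div_const d3
  have hA' := (hasDerivAt_slice_t A hA ((p.1 - d2)/d1) ((p.2 - d4)/d3)).comp p.2 hin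
  have hB' := (hasDerivAt_slice_t B hB ((p.1 - d2)/d1) ((p.2 - d4)/d3)).comp p.2 hin
  have h := ((hA'.const_mul a5).add (hB'.const_mul a6)).add_const a7
  refine h.congr_deriv ?_
  ring

set_option maxHeartbeats 2000000 in
/-- equivalence transformations of the diffusion system (1).
If `(u,v)` solves `u_t = ∂_x[f(u,v)u_x + g(u,v)v_x]`, `v_t = ∂_x[h(u,v)u_x + k(u,v)v_x]`,
then `u' = c5·u + c6·v + c7`, `v' = c8·u + c9·v + c10` (as functions of
`x' = c1·x + c2`, `t' = c3·t + c4`) solve a system of the same form whose coefficient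
matrix is `F' = (c1²/c3)·C·F·C⁻¹`, with the explicit entry formulas of the paper. -/
theorem diffusion_system_equivalence_transformation
    (c1 c2 c3 c4 c5 c6 c7 c8 c9 c10 : ℝ)
    (hc1 : c1 ≠ 0) (hc3 : c3 ≠ 0) (hdet : c5 * c9 - c6 * c8 ≠ 0)
    (C : Matrix (Fin 2) (Fin 2) ℝ) (hC : C = !![c5, c6; c8, c9])
    (f g h k : ℝ × ℝ → ℝ)
    (hf : ContDiff ℝ (⊤ : ℕ∞) f) (hg : ContDiff ℝ (⊤ : ℕ∞) g) (hh : ContDiff ℝ (⊤ : ℕ∞) h) (hk : ContDiff ℝ (⊤ : ℕ∞) k)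
    (u v : ℝ × ℝ → ℝ) (hu : ContDiff ℝ (⊤ : ℕ∞) u) (hv : ContDiff ℝ (⊤ : ℕ∞) v)
    (heq1 : ∀ p : ℝ × ℝ, pdt u p =
      pdx (fun q => f (u q, v q) * pdx u q + g (u q, v q) * pdx v q) p)
    (heq2 : ∀ p : ℝ × ℝ, pdt v p =
      pdx (fun q => h (u q, v q) * pdx u q + k (u q, v q) * pdx v q) p)
    (u' v' : ℝ × ℝ → ℝ)
    (hu' : ∀ p : ℝ × ℝ, u' p =
      c5 * u ((p.1 - c2) / c1, (p.2 - c4) / c3) + c6 * v ((p.1 - c2) / c1, (p.2 - c4) / c3) + c7)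
    (hv' : ∀ p : ℝ × ℝ, v' p =
      c8 * u ((p.1 - c2) / c1, (p.2 - c4) / c3) + c9 * v ((p.1 - c2) / c1, (p.2 - c4) / c3) + c10)
    (F' : ℝ × ℝ → Matrix (Fin 2) (Fin 2) ℝ)
    (hF' : ∀ α β : ℝ, F' (c5 * α + c6 * β + c7, c8 * α + c9 * β + c10) =
      (c1 ^ 2 / c3) • (C * !![f (α, β), g (α, β); h (α, β), k (α, β)] * C⁻¹)) :
    (∀ p : ℝ × ℝ, pdt u' p =
      pdx (fun q => F' (u' q, v' q) 0 0 * pdx u' q + F' (u' q, v' q) 0 1 * pdx v' q) p) ∧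
    (∀ p : ℝ × ℝ, pdt v' p =
      pdx (fun q => F' (u' q, v' q) 1 0 * pdx u' q + F' (u' q, v' q) 1 1 * pdx v' q) p) ∧
    (∀ α β : ℝ, F' (c5 * α + c6 * β + c7, c8 * α + c9 * β + c10) 0 0 =
      c1 ^ 2 * (c5 * (c9 * f (α, β) - c8 * g (α, β)) + c6 * (c9 * h (α, β) - c8 * k (α, β))) /
        (c3 * (c5 * c9 - c6 * c8))) ∧
    (∀ α β : ℝ, F' (c5 * α + c6 * β + c7, c8 * α + c9 * β + c10) 0 1 =
      c1 ^ 2 * (-(c5 * (c6 * f (α, β) - c5 * g (α, β))) - c6 * (c6 * h (α, β) - c5 * k (α, β))) /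
        (c3 * (c5 * c9 - c6 * c8))) ∧
    (∀ α β : ℝ, F' (c5 * α + c6 * β + c7, c8 * α + c9 * β + c10) 1 0 =
      c1 ^ 2 * (c8 * (c9 * f (α, β) - c8 * g (α, β)) + c9 * (c9 * h (α, β) - c8 * k (α, β))) /
        (c3 * (c5 * c9 - c6 * c8))) ∧
    (∀ α β : ℝ, F' (c5 * α + c6 * β + c7, c8 * α + c9 * β + c10) 1 1 =
      c1 ^ 2 * (-(c8 * (c6 * f (α, β) - c5 * g (α, β))) - c9 * (c6 * h (α, β) - c5 * k (α, β))) /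
        (c3 * (c5 * c9 - c6 * c8))) := by
  have hud : Differentiable ℝ u := hu.differentiable (by simp)
  have hvd : Differentiable ℝ v := hv.differentiable (by simp)
  -- entry formulas for F'
  have hCinv : C⁻¹ = (c5 * c9 - c6 * c8)⁻¹ • !![c9, -c6; -c8, c5] := by
    rw [hC, Matrix.inv_def, Matrix.adjugate_fin_two_of, Matrix.det_fin_two_of,
      Ring.inverse_eq_inv']
  have h00 : ∀ α β : ℝ, F' (c5 * α + c6 * β + c7, c8 * α + c9 * β + c10) 0 0 =
      c1 ^ 2 * (c5 * (c9 * f (α, β) - c8 * g (α, β)) + c6 * (c9 * h (α, β) - c8 * k (α, β))) /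
        (c3 * (c5 * c9 - c6 * c8)) := by
    intro α β
    rw [hF', hCinv, hC]
    simp [Matrix.mul_apply, Fin.sum_univ_two]
    field_simp
    first | (left; ring) | ring
  have h01 : ∀ α β : ℝ, F' (c5 * α + c6 * β + c7, c8 * α + c9 * β + c10) 0 1 =
      c1 ^ 2 * (-(c5 * (c6 * f (α, β) - c5 * g (α, β))) - c6 * (c6 * h (α, β) - c5 * k (α, β))) /
        (c3 * (c5 * c9 - c6 * c8)) := by
    intro α β
    rw [hF', hCinv, hC]
    simp [Matrix.mul_apply, Fin.sum_univ_two]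
    field_simp
    first | (left; ring) | ring
  have h10 : ∀ α β : ℝ, F' (c5 * α + c6 * β + c7, c8 * α + c9 * β + c10) 1 0 =
      c1 ^ 2 * (c8 * (c9 * f (α, β) - c8 * g (α, β)) + c9 * (c9 * h (α, β) - c8 * k (α, β))) /
        (c3 * (c5 * c9 - c6 * c8)) := by
    intro α β
    rw [hF', hCinv, hC]
    simp [Matrix.mul_apply, Fin.sum_univ_two]
    field_simp
    first | (left; ring) | ring
  have h11 : ∀ α β : ℝ, F' (c5 * α + c6 * β + c7, c8 * α + c9 * β + c10) 1 1 =
      c1 ^ 2 * (-(c8 * (c6 * f (α, β) - c5 * g (α, β))) - c9 * (c6 * h (α, β) - c5 * k (α, β))) /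
        (c3 * (c5 * c9 - c6 * c8)) := by
    intro α β
    rw [hF', hCinv, hC]
    simp [Matrix.mul_apply, Fin.sum_univ_two]
    field_simp
    first | (left; ring) | ring
  -- derivatives of the transformed dependent variables
  have hpdxu' : ∀ q : ℝ × ℝ, pdx u' q =
      (c5 * pdx u ((q.1 - c2)/c1, (q.2 - c4)/c3)
        + c6 * pdx v ((q.1 - c2)/c1, (q.2 - c4)/c3)) * (1/c1) := by
    intro q
    have hfun : (fun x => u' (x, q.2)) = fun x =>
        c5 * u ((x - c2)/c1, (q.2 - c4)/c3) + c6 * v ((x - c2)/c1, (q.2 - c4)/c3) + c7 := by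
      funext x; exact hu' (x, q.2)
    show deriv (fun x => u' (x, q.2)) q.1 = _
    rw [hfun]
    exact (combo_x u v hud hvd c5 c6 c7 c1 c2 c3 c4 q).deriv
  have hpdxv' : ∀ q : ℝ × ℝ, pdx v' q =
      (c8 * pdx u ((q.1 - c2)/c1, (q.2 - c4)/c3)
        + c9 * pdx v ((q.1 - c2)/c1, (q.2 - c4)/c3)) * (1/c1) := by
    intro q
    have hfun : (fun x => v' (x, q.2)) = fun x =>
        c8 * u ((x - c2)/c1, (q.2 - c4)/c3) + c9 * v ((x - c2)/c1, (q.2 - c4)/c3) + c10 := by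
      funext x; exact hv' (x, q.2)
    show deriv (fun x => v' (x, q.2)) q.1 = _
    rw [hfun]
    exact (combo_x u v hud hvd c8 c9 c10 c1 c2 c3 c4 q).deriv
  have hpdtu' : ∀ q : ℝ × ℝ, pdt u' q =
      (c5 * pdt u ((q.1 - c2)/c1, (q.2 - c4)/c3)
        + c6 * pdt v ((q.1 - c2)/c1, (q.2 - c4)/c3)) * (1/c3) := by
    intro q
    have hfun : (fun t => u' (q.1, t)) = fun t =>
        c5 * u ((q.1 - c2)/c1, (t - c4)/c3) + c6 * v ((q.1 - c2)/c1, (t - c4)/c3) + c7 := by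
      funext t; exact hu' (q.1, t)
    show deriv (fun t => u' (q.1, t)) q.2 = _
    rw [hfun]
    exact (combo_t u v hud hvd c5 c6 c7 c1 c2 c3 c4 q).deriv
  have hpdtv' : ∀ q : ℝ × ℝ, pdt v' q =
      (c8 * pdt u ((q.1 - c2)/c1, (q.2 - c4)/c3)
        + c9 * pdt v ((q.1 - c2)/c1, (q.2 - c4)/c3)) * (1/c3) := by
    intro q
    have hfun : (fun t => v' (q.1, t)) = fun t =>
        c8 * u ((q.1 - c2)/c1, (t - c4)/c3) + c9 * v ((q.1 - c2)/c1, (t - c4)/c3) + c10 := by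
      funext t; exact hv' (q.1, t)
    show deriv (fun t => v' (q.1, t)) q.2 = _
    rw [hfun]
    exact (combo_t u v hud hvd c8 c9 c10 c1 c2 c3 c4 q).deriv
  -- differentiability of the fluxes
  have hΦd : Differentiable ℝ (fun q => f (u q, v q) * pdx u q + g (u q, v q) * pdx v q) := by
    apply Differentiable.add
    · exact (((hf.comp (hu.prodMk hv)).differentiable (by simp))).mul (differentiable_pdx u hu)
    · exact (((hg.comp (hu.prodMk hv)).differentiable (by simp))).mul (differentiable_pdx v hv)
  have hΨd : Differentiable ℝ (fun q => h (u q, v q) * pdx u q + k (u q, v q) * pdx v q) := by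
    apply Differentiable.add
    · exact (((hh.comp (hu.prodMk hv)).differentiable (by simp))).mul (differentiable_pdx u hu)
    · exact (((hk.comp (hu.prodMk hv)).differentiable (by simp))).mul (differentiable_pdx v hv)
  refine ⟨?_, ?_, h00, h01, h10, h11⟩
  · -- first equation
    intro p
    have hW : (fun q => F' (u' q, v' q) 0 0 * pdx u' q + F' (u' q, v' q) 0 1 * pdx v' q)
        = fun q => (c1/c3*c5) *
            (f (u ((q.1 - c2)/c1, (q.2 - c4)/c3), v ((q.1 - c2)/c1, (q.2 - c4)/c3))
                * pdx u ((q.1 - c2)/c1, (q.2 - c4)/c3)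
              + g (u ((q.1 - c2)/c1, (q.2 - c4)/c3), v ((q.1 - c2)/c1, (q.2 - c4)/c3))
                * pdx v ((q.1 - c2)/c1, (q.2 - c4)/c3))
          + (c1/c3*c6) *
            (h (u ((q.1 - c2)/c1, (q.2 - c4)/c3), v ((q.1 - c2)/c1, (q.2 - c4)/c3))
                * pdx u ((q.1 - c2)/c1, (q.2 - c4)/c3)
              + k (u ((q.1 - c2)/c1, (q.2 - c4)/c3), v ((q.1 - c2)/c1, (q.2 - c4)/c3))
                * pdx v ((q.1 - c2)/c1, (q.2 - c4)/c3)) + 0 := by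
      funext q
      rw [hpdxu' q, hpdxv' q, hu' q, hv' q, h00, h01]
      set X := ((q.1 - c2) / c1, (q.2 - c4) / c3) with hX
      generalize hD : c5 * c9 - c6 * c8 = D at hdet ⊢
      field_simp
      subst hD
      ring
    rw [hW, hpdtu' p]
    have hR : pdx (fun q : ℝ × ℝ => (c1/c3*c5) *
            (f (u ((q.1 - c2)/c1, (q.2 - c4)/c3), v ((q.1 - c2)/c1, (q.2 - c4)/c3))
                * pdx u ((q.1 - c2)/c1, (q.2 - c4)/c3)
              + g (u ((q.1 - c2)/c1, (q.2 - c4)/c3), v ((q.1 - c2)/c1, (q.2 - c4)/c3))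
                * pdx v ((q.1 - c2)/c1, (q.2 - c4)/c3))
          + (c1/c3*c6) *
            (h (u ((q.1 - c2)/c1, (q.2 - c4)/c3), v ((q.1 - c2)/c1, (q.2 - c4)/c3))
                * pdx u ((q.1 - c2)/c1, (q.2 - c4)/c3)
              + k (u ((q.1 - c2)/c1, (q.2 - c4)/c3), v ((q.1 - c2)/c1, (q.2 - c4)/c3))
                * pdx v ((q.1 - c2)/c1, (q.2 - c4)/c3)) + 0) p =
        ((c1/c3*c5) * pdx (fun q => f (u q, v q) * pdx u q + g (u q, v q) * pdx v q)
            ((p.1 - c2)/c1, (p.2 - c4)/c3)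
          + (c1/c3*c6) * pdx (fun q => h (u q, v q) * pdx u q + k (u q, v q) * pdx v q)
            ((p.1 - c2)/c1, (p.2 - c4)/c3)) * (1/c1) :=
      (combo_x _ _ hΦd hΨd (c1/c3*c5) (c1/c3*c6) 0 c1 c2 c3 c4 p).deriv
    rw [hR, ← heq1, ← heq2]
    field_simp
  · -- second equation
    intro p
    have hW : (fun q => F' (u' q, v' q) 1 0 * pdx u' q + F' (u' q, v' q) 1 1 * pdx v' q)
        = fun q => (c1/c3*c8) *
            (f (u ((q.1 - c2)/c1, (q.2 - c4)/c3), v ((q.1 - c2)/c1, (q.2 - c4)/c3))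
                * pdx u ((q.1 - c2)/c1, (q.2 - c4)/c3)
              + g (u ((q.1 - c2)/c1, (q.2 - c4)/c3), v ((q.1 - c2)/c1, (q.2 - c4)/c3))
                * pdx v ((q.1 - c2)/c1, (q.2 - c4)/c3))
          + (c1/c3*c9) *
            (h (u ((q.1 - c2)/c1, (q.2 - c4)/c3), v ((q.1 - c2)/c1, (q.2 - c4)/c3))
                * pdx u ((q.1 - c2)/c1, (q.2 - c4)/c3)
              + k (u ((q.1 - c2)/c1, (q.2 - c4)/c3), v ((q.1 - c2)/c1, (q.2 - c4)/c3))
                * pdx v ((q.1 - c2)/c1, (q.2 - c4)/c3)) + 0 := by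
      funext q
      rw [hpdxu' q, hpdxv' q, hu' q, hv' q, h10, h11]
      set X := ((q.1 - c2) / c1, (q.2 - c4) / c3) with hX
      generalize hD : c5 * c9 - c6 * c8 = D at hdet ⊢
      field_simp
      subst hD
      ring
    rw [hW, hpdtv' p]
    have hR : pdx (fun q : ℝ × ℝ => (c1/c3*c8) *
            (f (u ((q.1 - c2)/c1, (q.2 - c4)/c3), v ((q.1 - c2)/c1, (q.2 - c4)/c3))
                * pdx u ((q.1 - c2)/c1, (q.2 - c4)/c3)
              + g (u ((q.1 - c2)/c1, (q.2 - c4)/c3), v ((q.1 - c2)/c1, (q.2 - c4)/c3))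
                * pdx v ((q.1 - c2)/c1, (q.2 - c4)/c3))
          + (c1/c3*c9) *
            (h (u ((q.1 - c2)/c1, (q.2 - c4)/c3), v ((q.1 - c2)/c1, (q.2 - c4)/c3))
                * pdx u ((q.1 - c2)/c1, (q.2 - c4)/c3)
              + k (u ((q.1 - c2)/c1, (q.2 - c4)/c3), v ((q.1 - c2)/c1, (q.2 - c4)/c3))
                * pdx v ((q.1 - c2)/c1, (q.2 - c4)/c3)) + 0) p =
        ((c1/c3*c8) * pdx (fun q => f (u q, v q) * pdx u q + g (u q, v q) * pdx v q)
            ((p.1 - c2)/c1, (p.2 - c4)/c3)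
          + (c1/c3*c9) * pdx (fun q => h (u q, v q) * pdx u q + k (u q, v q) * pdx v q)
            ((p.1 - c2)/c1, (p.2 - c4)/c3)) * (1/c1) :=
      (combo_x _ _ hΦd hΨd (c1/c3*c8) (c1/c3*c9) 0 c1 c2 c3 c4 p).deriv
    rw [hR, ← heq1, ← heq2]
    field_simp
end

section
/- Let c1,...,c9 be real constants with c1 ≠ 0, c3 ≠ 0, c5 ≠ 0 and c7 ≠ 0. Let f, g, h, k : ℝ² → ℝ be smooth and let u, v, w : ℝ² → ℝ be smooth functions of (x,t) satisfying the first-generation potential system w_x = u, w_t = f(u,v)·u_x + g(u,v)·v_x, v_t = ∂_x[h(u,v)·u_x + k(u,v)·v_x] on ℝ². Define u'(x',t') = c5·u(x,t)+c6, v'(x',t') = c7·v(x,t)+c8, w'(x',t') = c1c5·w(x,t) + c1c6·x + c9, where x = (x'−c2)/c1 and t = (t'−c4)/c3, and define transformed coefficient functions f'(c5α+c6, c7β+c8) = (c1²/c3)·f(α,β), g'(c5α+c6, c7β+c8) = (c5c1²/(c7c3))·g(α,β), h'(c5α+c6, c7β+c8) = (c7c1²/(c5c3))·h(α,β), k'(c5α+c6,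 c7β+c8) = (c1²/c3)·k(α,β). Then (u',v',w') satisfies the system of the same form: w'_{x'} = u', w'_{t'} = f'(u',v')·u'_{x'} + g'(u',v')·v'_{x'}, v'_{t'} = ∂_{x'}[h'(u',v')·u'_{x'} + k'(u',v')·v'_{x'}]. -/
open Matrix

lemma hasDerivAt_slice_x_s1 (φ : ℝ × ℝ → ℝ) (hφ : Differentiable ℝ φ) (p : ℝ × ℝ) :
    HasDerivAt (fun x => φ (x, p.2)) (fderiv ℝ φ p (1, 0)) p.1 := by
  have h1 : HasDerivAt (fun x : ℝ => (x, p.2)) ((1 : ℝ), (0 : ℝ)) p.1 :=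
    HasDerivAt.prodMk (hasDerivAt_id p.1) (hasDerivAt_const _ _)
  have h2 := (hφ (p.1, p.2)).hasFDerivAt.comp_hasDerivAt p.1 h1
  exact h2

lemma hasDerivAt_slice_t_s1 (φ : ℝ × ℝ → ℝ) (hφ : Differentiable ℝ φ) (p : ℝ × ℝ) :
    HasDerivAt (fun t => φ (p.1, t)) (fderiv ℝ φ p (0, 1)) p.2 := by
  have h1 : HasDerivAt (fun t : ℝ => (p.1, t)) ((0 : ℝ), (1 : ℝ)) p.2 :=
    HasDerivAt.prodMk (hasDerivAt_const _ _) (hasDerivAt_id p.2)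
  have h2 := (hφ (p.1, p.2)).hasFDerivAt.comp_hasDerivAt p.2 h1
  exact h2

lemma pdx_eq_fderiv (φ : ℝ × ℝ → ℝ) (hφ : Differentiable ℝ φ) (p : ℝ × ℝ) :
    pdx φ p = fderiv ℝ φ p (1, 0) := (hasDerivAt_slice_x_s1 φ hφ p).deriv

lemma pdt_eq_fderiv (φ : ℝ × ℝ → ℝ) (hφ : Differentiable ℝ φ) (p : ℝ × ℝ) :
    pdt φ p = fderiv ℝ φ p (0, 1) := (hasDerivAt_slice_t_s1 φ hφ p).deriv

lemma contDiff_pdx (φ : ℝ × ℝ → ℝ) (hφ : ContDiff ℝ (⊤ : ℕ∞) φ) : ContDiff ℝ (⊤ : ℕ∞) (pdx φ) := by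
  have he : pdx φ = fun p => fderiv ℝ φ p (1, 0) :=
    funext fun p => pdx_eq_fderiv φ (hφ.differentiable (by simp)) p
  rw [he]
  exact (hφ.fderiv_right (le_of_eq (by simp))).clm_apply contDiff_const

lemma hasDerivAt_px (c1 c2 s : ℝ) (φ : ℝ × ℝ → ℝ) (hφ : Differentiable ℝ φ) (x : ℝ) :
    HasDerivAt (fun y => φ ((y - c2) / c1, s)) ((1 / c1) * pdx φ ((x - c2) / c1, s)) x := by
  have h1 : HasDerivAt (fun y : ℝ => ((y - c2) / c1, s)) ((1 / c1 : ℝ), (0 : ℝ)) x :=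
    HasDerivAt.prodMk (((hasDerivAt_id x).sub_const c2).div_const c1) (hasDerivAt_const _ _)
  have h2 := (hφ ((x - c2) / c1, s)).hasFDerivAt.comp_hasDerivAt x h1
  have h3 : fderiv ℝ φ ((x - c2) / c1, s) (1 / c1, 0)
      = (1 / c1) * pdx φ ((x - c2) / c1, s) := by
    rw [pdx_eq_fderiv φ hφ]
    have he : ((1 / c1 : ℝ), (0 : ℝ)) = (1 / c1) • ((1 : ℝ), (0 : ℝ)) := by simp
    rw [he, _root_.map_smul, smul_eq_mul]
  rw [← h3]
  exact h2

lemma hasDerivAt_pt (c3 c4 r : ℝ) (φ : ℝ × ℝ → ℝ) (hφ : Differentiable ℝ φ) (t : ℝ) :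
    HasDerivAt (fun y => φ (r, (y - c4) / c3)) ((1 / c3) * pdt φ (r, (t - c4) / c3)) t := by
  have h1 : HasDerivAt (fun y : ℝ => (r, (y - c4) / c3)) ((0 : ℝ), (1 / c3 : ℝ)) t :=
    HasDerivAt.prodMk (hasDerivAt_const _ _) (((hasDerivAt_id t).sub_const c4).div_const c3)
  have h2 := (hφ (r, (t - c4) / c3)).hasFDerivAt.comp_hasDerivAt t h1
  have h3 : fderiv ℝ φ (r, (t - c4) / c3) (0, 1 / c3)
      = (1 / c3) * pdt φ (r, (t - c4) / c3) := by
    rw [pdt_eq_fderiv φ hφ]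
    have he : ((0 : ℝ), (1 / c3 : ℝ)) = (1 / c3) • ((0 : ℝ), (1 : ℝ)) := by simp
    rw [he, _root_.map_smul, smul_eq_mul]
  rw [← h3]
  exact h2

/-- equivalence transformations of the first-generation potential system (2).
If `(u,v,w)` solves `w_x = u`, `w_t = f(u,v)u_x + g(u,v)v_x`, `v_t = ∂_x[h(u,v)u_x + k(u,v)v_x]`,
then `u' = c5·u + c6`, `v' = c7·v + c8`, `w' = c1·c5·w + c1·c6·x + c9` (as functions of
`x' = c1·x + c2`, `t' = c3·t + c4`) solve the system of the same form with coefficients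
`f' = (c1²/c3)f`, `g' = (c5 c1²/(c7 c3))g`, `h' = (c7 c1²/(c5 c3))h`, `k' = (c1²/c3)k`. -/
theorem potential_system_equivalence_transformation
    (c1 c2 c3 c4 c5 c6 c7 c8 c9 : ℝ)
    (hc1 : c1 ≠ 0) (hc3 : c3 ≠ 0) (hc5 : c5 ≠ 0) (hc7 : c7 ≠ 0)
    (f g h k : ℝ × ℝ → ℝ)
    (hf : ContDiff ℝ (⊤ : ℕ∞) f) (hg : ContDiff ℝ (⊤ : ℕ∞) g) (hh : ContDiff ℝ (⊤ : ℕ∞) h) (hk : ContDiff ℝ (⊤ : ℕ∞) k)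
    (u v w : ℝ × ℝ → ℝ) (hu : ContDiff ℝ (⊤ : ℕ∞) u) (hv : ContDiff ℝ (⊤ : ℕ∞) v) (hw : ContDiff ℝ (⊤ : ℕ∞) w)
    (heq1 : ∀ p : ℝ × ℝ, pdx w p = u p)
    (heq2 : ∀ p : ℝ × ℝ, pdt w p = f (u p, v p) * pdx u p + g (u p, v p) * pdx v p)
    (heq3 : ∀ p : ℝ × ℝ, pdt v p =
      pdx (fun q => h (u q, v q) * pdx u q + k (u q, v q) * pdx v q) p)
    (u' v' w' : ℝ × ℝ → ℝ)
    (hu' : ∀ p : ℝ × ℝ, u' p = c5 * u ((p.1 - c2) / c1, (p.2 - c4) / c3) + c6)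
    (hv' : ∀ p : ℝ × ℝ, v' p = c7 * v ((p.1 - c2) / c1, (p.2 - c4) / c3) + c8)
    (hw' : ∀ p : ℝ × ℝ, w' p =
      c1 * c5 * w ((p.1 - c2) / c1, (p.2 - c4) / c3) + c1 * c6 * ((p.1 - c2) / c1) + c9)
    (f' g' h' k' : ℝ × ℝ → ℝ)
    (hf' : ∀ α β : ℝ, f' (c5 * α + c6, c7 * β + c8) = (c1 ^ 2 / c3) * f (α, β))
    (hg' : ∀ α β : ℝ, g' (c5 * α + c6, c7 * β + c8) = (c5 * c1 ^ 2 / (c7 * c3)) * g (α, β))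
    (hh' : ∀ α β : ℝ, h' (c5 * α + c6, c7 * β + c8) = (c7 * c1 ^ 2 / (c5 * c3)) * h (α, β))
    (hk' : ∀ α β : ℝ, k' (c5 * α + c6, c7 * β + c8) = (c1 ^ 2 / c3) * k (α, β)) :
    (∀ p : ℝ × ℝ, pdx w' p = u' p) ∧
    (∀ p : ℝ × ℝ, pdt w' p = f' (u' p, v' p) * pdx u' p + g' (u' p, v' p) * pdx v' p) ∧
    (∀ p : ℝ × ℝ, pdt v' p =
      pdx (fun q => h' (u' q, v' q) * pdx u' q + k' (u' q, v' q) * pdx v' q) p) := by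
  have du : Differentiable ℝ u := hu.differentiable (by simp)
  have dv : Differentiable ℝ v := hv.differentiable (by simp)
  have dw : Differentiable ℝ w := hw.differentiable (by simp)
  -- abbreviation for the inverse coordinate change
  set σ : ℝ × ℝ → ℝ × ℝ := fun p => ((p.1 - c2) / c1, (p.2 - c4) / c3) with hσ
  -- x-derivatives of the primed variables
  have hdxu' : ∀ p : ℝ × ℝ, pdx u' p = c5 * ((1 / c1) * pdx u (σ p)) := by
    intro p
    have hfe : (fun x => u' (x, p.2)) =
        fun x => c5 * u ((x - c2) / c1, (p.2 - c4) / c3) + c6 :=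
      funext fun x => hu' (x, p.2)
    have hd := ((hasDerivAt_px c1 c2 ((p.2 - c4) / c3) u du p.1).const_mul c5).add_const c6
    show deriv (fun x => u' (x, p.2)) p.1 = _
    rw [hfe]
    exact hd.deriv
  have hdxv' : ∀ p : ℝ × ℝ, pdx v' p = c7 * ((1 / c1) * pdx v (σ p)) := by
    intro p
    have hfe : (fun x => v' (x, p.2)) =
        fun x => c7 * v ((x - c2) / c1, (p.2 - c4) / c3) + c8 :=
      funext fun x => hv' (x, p.2)
    have hd := ((hasDerivAt_px c1 c2 ((p.2 - c4) / c3) v dv p.1).const_mul c7).add_const c8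
    show deriv (fun x => v' (x, p.2)) p.1 = _
    rw [hfe]
    exact hd.deriv
  refine ⟨?_, ?_, ?_⟩
  · -- first equation
    intro p
    have hfe : (fun x => w' (x, p.2)) =
        fun x => c1 * c5 * w ((x - c2) / c1, (p.2 - c4) / c3) + c1 * c6 * ((x - c2) / c1) + c9 :=
      funext fun x => hw' (x, p.2)
    have h1 := (hasDerivAt_px c1 c2 ((p.2 - c4) / c3) w dw p.1).const_mul (c1 * c5)
    have h2 : HasDerivAt (fun x : ℝ => c1 * c6 * ((x - c2) / c1)) (c1 * c6 * (1 / c1)) p.1 :=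
      (((hasDerivAt_id p.1).sub_const c2).div_const c1).const_mul (c1 * c6)
    have hd := ((h1.add h2).add_const c9).deriv
    have : pdx w' p = c1 * c5 * (1 / c1 * pdx w (σ p)) + c1 * c6 * (1 / c1) := by
      show deriv (fun x => w' (x, p.2)) p.1 = _
      rw [hfe]; exact hd
    rw [this, heq1, hu' p]
    field_simp
    simp only [hσ]
  · -- second equation
    intro p
    have hfe : (fun t => w' (p.1, t)) =
        fun t => c1 * c5 * w ((p.1 - c2) / c1, (t - c4) / c3) + (c1 * c6 * ((p.1 - c2) / c1) + c9) :=
      funext fun t => by rw [hw' (p.1, t)]; ring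
    have h1 := ((hasDerivAt_pt c3 c4 ((p.1 - c2) / c1) w dw p.2).const_mul (c1 * c5)).add_const
      (c1 * c6 * ((p.1 - c2) / c1) + c9)
    have hlhs : pdt w' p = c1 * c5 * (1 / c3 * pdt w (σ p)) := by
      show deriv (fun t => w' (p.1, t)) p.2 = _
      rw [hfe]; exact h1.deriv
    rw [hlhs, heq2, hu' p, hv' p, hf' _ _, hg' _ _, hdxu' p, hdxv' p]
    field_simp
    ring
  · -- third equation
    intro p
    set A : ℝ × ℝ → ℝ := fun q => h (u q, v q) * pdx u q + k (u q, v q) * pdx v q with hA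
    have hAc : ContDiff ℝ (⊤ : ℕ∞) A :=
      ((hh.comp (ContDiff.prodMk hu hv)).mul (contDiff_pdx u hu)).add
        ((hk.comp (ContDiff.prodMk hu hv)).mul (contDiff_pdx v hv))
    have hAd : Differentiable ℝ A := hAc.differentiable (by simp)
    have hA'e : (fun q => h' (u' q, v' q) * pdx u' q + k' (u' q, v' q) * pdx v' q) =
        fun q => (c7 * c1 / c3) * A (σ q) := by
      funext q
      rw [hu' q, hv' q, hh' _ _, hk' _ _, hdxu' q, hdxv' q, hA]
      field_simp
      ring
    rw [hA'e]
    -- pdt v' p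
    have hlhs : pdt v' p = c7 * (1 / c3 * pdt v (σ p)) := by
      have hfe : (fun t => v' (p.1, t)) =
          fun t => c7 * v ((p.1 - c2) / c1, (t - c4) / c3) + c8 :=
        funext fun t => hv' (p.1, t)
      show deriv (fun t => v' (p.1, t)) p.2 = _
      rw [hfe]
      exact (((hasDerivAt_pt c3 c4 ((p.1 - c2) / c1) v dv p.2).const_mul c7).add_const c8).deriv
    have hrhs : pdx (fun q => (c7 * c1 / c3) * A (σ q)) p
        = (c7 * c1 / c3) * (1 / c1 * pdx A (σ p)) := by
      show deriv (fun x => (c7 * c1 / c3) * A ((x - c2) / c1, (p.2 - c4) / c3)) p.1 = _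
      exact ((hasDerivAt_px c1 c2 ((p.2 - c4) / c3) A hAd p.1).const_mul (c7 * c1 / c3)).deriv
    rw [hlhs, hrhs, heq3 (σ p)]
    field_simp
end

section
/- Let f, g, h, k : ℝ² → ℝ be smooth coefficient functions satisfying the linear dependence relation f(α,β) = g(α,β) − h(α,β) + k(α,β) for all (α,β) ∈ ℝ², and let c ≠ 1 be a real constant, with C = [[1,1],[1,c]]. If u, v : ℝ² → ℝ are smooth solutions of u_t = ∂_x[f(u,v)·u_x + g(u,v)·v_x], v_t = ∂_x[h(u,v)·u_x + k(u,v)·v_x], then the functions u' = u + v and v' = u + c·v solve a system of the same form with vanishing coefficient of v'_{x'} in the first equation: namely u'_t = ∂_x[f̃(u',v')·u'_x], v'_t = ∂_x[h̃(u',v')·u'_x + k̃(u',v')·v'_x], where f̃, h̃, k̃ are defined by the conjugation identity C·[[f,g],[h,k]]·C⁻¹ (entries composed with the inverse affine change of dependent variables), whose (1,2)-entry (g + k − f − h)/(c − 1) vanishes identically by the assumed relation f = g − h + k. -/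
open Matrix

lemma diffAt_x {A : ℝ×ℝ→ℝ} (hA : Differentiable ℝ A) (x t : ℝ) :
    DifferentiableAt ℝ (fun y => A (y, t)) x :=
  (hA (x,t)).comp x (differentiableAt_id.prodMk (differentiableAt_const t))

lemma diffAt_t {A : ℝ×ℝ→ℝ} (hA : Differentiable ℝ A) (x t : ℝ) :
    DifferentiableAt ℝ (fun s => A (x, s)) t :=
  (hA (x,t)).comp t ((differentiableAt_const x).prodMk differentiableAt_id)

lemma pdx_add {A B : ℝ×ℝ→ℝ} (hA : Differentiable ℝ A) (hB : Differentiable ℝ B) (p : ℝ×ℝ) :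
    pdx (fun q => A q + B q) p = pdx A p + pdx B p :=
  deriv_add (diffAt_x hA p.1 p.2) (diffAt_x hB p.1 p.2)

lemma pdx_const_mul {B : ℝ×ℝ→ℝ} (c : ℝ) (hB : Differentiable ℝ B) (p : ℝ×ℝ) :
    pdx (fun q => c * B q) p = c * pdx B p :=
  deriv_const_mul c (diffAt_x hB p.1 p.2)

lemma pdt_add {A B : ℝ×ℝ→ℝ} (hA : Differentiable ℝ A) (hB : Differentiable ℝ B) (p : ℝ×ℝ) :
    pdt (fun q => A q + B q) p = pdt A p + pdt B p :=
  deriv_add (diffAt_t hA p.1 p.2) (diffAt_t hB p.1 p.2)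

lemma pdt_const_mul {B : ℝ×ℝ→ℝ} (c : ℝ) (hB : Differentiable ℝ B) (p : ℝ×ℝ) :
    pdt (fun q => c * B q) p = c * pdt B p :=
  deriv_const_mul c (diffAt_t hB p.1 p.2)

lemma pdx_eq_fderiv_s2 {A : ℝ×ℝ→ℝ} (hA : Differentiable ℝ A) :
    pdx A = fun p => fderiv ℝ A p (1, 0) := by
  funext p
  have h1 : HasDerivAt (fun x : ℝ => (x, p.2)) ((1:ℝ), (0:ℝ)) p.1 :=
    (hasDerivAt_id p.1).prodMk (hasDerivAt_const p.1 p.2)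
  have h2 : HasDerivAt (fun x => A (x, p.2)) (fderiv ℝ A (p.1, p.2) (1, 0)) p.1 :=
    ((hA (p.1, p.2)).hasFDerivAt.comp_hasDerivAt p.1 h1)
  simpa [pdx] using h2.deriv

lemma pdx_contDiff {A : ℝ×ℝ→ℝ} (hA : ContDiff ℝ (⊤ : ℕ∞) A) : ContDiff ℝ (⊤ : ℕ∞) (pdx A) := by
  rw [pdx_eq_fderiv_s2 (hA.differentiable (by simp))]
  exact ((ContinuousLinearMap.apply ℝ ℝ (((1:ℝ),(0:ℝ)) : ℝ×ℝ)).contDiff).comp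
    (hA.fderiv_right (m := (⊤ : ℕ∞)) (by simp))

/-- if the coefficients satisfy `f = g − h + k`, then the change of
dependent variables `u' = u + v`, `v' = u + c·v` (`c ≠ 1`, with matrix `C = [[1,1],[1,c]]`)
maps a solution of the diffusion system into a solution of a system of the same form whose
transformed coefficient matrix `C·F·C⁻¹` has identically vanishing `(1,2)`-entry
`(g + k − f − h)/(c − 1)`, so the first transformed equation involves no `v'_x` term. -/
theorem linear_dependence_kills_one_coefficient
    (c : ℝ) (hc : c ≠ 1)
    (C : Matrix (Fin 2) (Fin 2) ℝ) (hC : C = !![1, 1; 1, c])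
    (f g h k : ℝ × ℝ → ℝ)
    (hf : ContDiff ℝ (⊤ : ℕ∞) f) (hg : ContDiff ℝ (⊤ : ℕ∞) g) (hh : ContDiff ℝ (⊤ : ℕ∞) h) (hk : ContDiff ℝ (⊤ : ℕ∞) k)
    (hdep : ∀ α β : ℝ, f (α, β) = g (α, β) - h (α, β) + k (α, β))
    (u v : ℝ × ℝ → ℝ) (hu : ContDiff ℝ (⊤ : ℕ∞) u) (hv : ContDiff ℝ (⊤ : ℕ∞) v)
    (heq1 : ∀ p : ℝ × ℝ, pdt u p =
      pdx (fun q => f (u q, v q) * pdx u q + g (u q, v q) * pdx v q) p)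
    (heq2 : ∀ p : ℝ × ℝ, pdt v p =
      pdx (fun q => h (u q, v q) * pdx u q + k (u q, v q) * pdx v q) p)
    (ft gt ht kt : ℝ × ℝ → ℝ)
    (hconj : ∀ α β : ℝ,
      !![ft (α + β, α + c * β), gt (α + β, α + c * β);
         ht (α + β, α + c * β), kt (α + β, α + c * β)] =
        C * !![f (α, β), g (α, β); h (α, β), k (α, β)] * C⁻¹)
    (u' v' : ℝ × ℝ → ℝ)
    (hu' : ∀ p : ℝ × ℝ, u' p = u p + v p)
    (hv' : ∀ p : ℝ × ℝ, v' p = u p + c * v p) :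
    (∀ p : ℝ × ℝ, pdt u' p = pdx (fun q => ft (u' q, v' q) * pdx u' q) p) ∧
    (∀ p : ℝ × ℝ, pdt v' p =
      pdx (fun q => ht (u' q, v' q) * pdx u' q + kt (u' q, v' q) * pdx v' q) p) ∧
    (∀ α β : ℝ, gt (α + β, α + c * β) =
      (g (α, β) + k (α, β) - f (α, β) - h (α, β)) / (c - 1)) ∧
    (∀ α β : ℝ, gt (α + β, α + c * β) = 0) := by
  have hc1 : c - 1 ≠ 0 := sub_ne_zero.mpr hc
  have hinv : (!![1,1;1,c] : Matrix (Fin 2) (Fin 2) ℝ)⁻¹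
      = !![c/(c-1), -(1/(c-1)); -(1/(c-1)), 1/(c-1)] := by
    apply Matrix.inv_eq_right_inv
    ext i j
    fin_cases i <;> fin_cases j <;>
      simp [Matrix.mul_apply, Fin.sum_univ_two] <;> field_simp <;> ring
  -- entry formulas
  have hent : ∀ α β : ℝ,
      ft (α + β, α + c * β) = f (α, β) + h (α, β) ∧
      gt (α + β, α + c * β) = (g (α, β) + k (α, β) - f (α, β) - h (α, β)) / (c - 1) ∧
      ht (α + β, α + c * β) = f (α, β) + (c + 1) * h (α, β) - k (α, β) ∧
      kt (α + β, α + c * β) = k (α, β) - h (α, β) := by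
    intro α β
    have hm := hconj α β
    rw [hC, hinv, Matrix.mul_fin_two, Matrix.mul_fin_two] at hm
    have h00 := congrFun (congrFun hm 0) 0
    have h01 := congrFun (congrFun hm 0) 1
    have h10 := congrFun (congrFun hm 1) 0
    have h11 := congrFun (congrFun hm 1) 1
    simp at h00 h01 h10 h11
    have hd := hdep α β
    refine ⟨?_, ?_, ?_, ?_⟩
    · rw [h00]; field_simp; linear_combination hd
    · rw [h01]; field_simp; ring
    · rw [h10]; field_simp; linear_combination hd
    · rw [h11]; field_simp; linear_combination -hd
  have du : Differentiable ℝ u := hu.differentiable (by simp)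
  have dv : Differentiable ℝ v := hv.differentiable (by simp)
  have dA : Differentiable ℝ (fun q => f (u q, v q) * pdx u q + g (u q, v q) * pdx v q) :=
    (((hf.comp (hu.prodMk hv)).mul (pdx_contDiff hu)).add
      ((hg.comp (hu.prodMk hv)).mul (pdx_contDiff hv))).differentiable (by simp)
  have dB : Differentiable ℝ (fun q => h (u q, v q) * pdx u q + k (u q, v q) * pdx v q) :=
    (((hh.comp (hu.prodMk hv)).mul (pdx_contDiff hu)).add
      ((hk.comp (hu.prodMk hv)).mul (pdx_contDiff hv))).differentiable (by simp)
  have heu' : u' = fun p => u p + v p := funext hu'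
  have hev' : v' = fun p => u p + c * v p := funext hv'
  have hpu' : ∀ q, pdx u' q = pdx u q + pdx v q := by
    intro q; rw [heu']; exact pdx_add du dv q
  have hpv' : ∀ q, pdx v' q = pdx u q + c * pdx v q := by
    intro q; rw [hev']
    rw [pdx_add du (dv.const_mul c) q, pdx_const_mul c dv q]
  refine ⟨?_, ?_, fun α β => (hent α β).2.1, ?_⟩
  · intro p
    have h1 : pdt u' p = pdt u p + pdt v p := by rw [heu']; exact pdt_add du dv p
    rw [h1, heq1 p, heq2 p, ← pdx_add dA dB p]
    congr 1
    funext q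
    rw [hu' q, hv' q, (hent (u q) (v q)).1]
    have := hpu' q
    rw [show pdx u' q = pdx u q + pdx v q from ?_]
    · linear_combination (- pdx v q) * hdep (u q) (v q)
    · exact hpu' q
  · intro p
    have h1 : pdt v' p = pdt u p + c * pdt v p := by
      rw [hev', pdt_add du (dv.const_mul c) p, pdt_const_mul c dv p]
    rw [h1, heq1 p, heq2 p, ← pdx_const_mul c dB p, ← pdx_add dA (dB.const_mul c) p]
    congr 1
    funext q
    rw [hu' q, hv' q, (hent (u q) (v q)).2.2.1, (hent (u q) (v q)).2.2.2]
    rw [show pdx u' q = pdx u q + pdx v q from hpu' q,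
        show pdx v' q = pdx u q + c * pdx v q from hpv' q]
    linear_combination (- pdx v q) * hdep (u q) (v q)
  · intro α β
    rw [(hent α β).2.1, hdep α β]
    ring
end

section
/- (Theorem 1, linearizing direction.) Let a, γ ∈ ℝ with γ ≠ 0, p = (p1,p2), q = (q1,q2) ∈ ℝ², and let A = [[a1,a2],[a3,a4]] and Λ = [[μ1,μ2],[μ3,μ4]] be 2×2 real matrices such that the 3×3 block matrix M = [[a, pᵀ],[q, A]] is invertible with inverse N = [[b, rᵀ],[s, B]], where r=(r1,r2), s=(s1,s2), B=[[b1,b2],[b3,b4]]. Suppose u', v', w', z' : ℝ² → ℝ are smooth functions of (x',t') satisfying the linear auxiliary system w'_{x'} = u', w'_{t'} = μ1·u'_{x'} + μ2·v'_{x'}, z'_{x'} = v', z'_{t'} = μ3·u'_{x'} + μ4·v'_{x'}. Suppose the map Ψ : ℝ² → ℝ², Ψ(x',t') = (b·x' + r1·w'(x',t') + r2·z'(x',t'), γ·t'), is a bijection with smooth inverse, and define smooth w, z : ℝ² → ℝ by w(Ψ(x',t')) = s1·x' + b1·w'(x',t') + b2·z'(x',t') and z(Ψ(x',t')) = s2·x'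 + b3·w'(x',t') + b4·z'(x',t'); set u = w_x, v = z_x. Assume that a + p1·u + p2·v vanishes nowhere and that the matrix H(u,v) := (a + p1·u + p2·v)·A − (A·(u,v)ᵀ + q)·pᵀ is invertible at every point. Then (u,v,w,z) satisfies the nonlinear second-generation potential system w_x = u, w_t = F₁₁·u_x + F₁₂·v_x, z_x = v, z_t = F₂₁·u_x + F₂₂·v_x, where the coefficient matrix is F(u,v) = H(u,v)⁻¹·Λ·H(u,v) / (γ·(a + p1·u + p2·v)²). -/
open Matrix

lemma hasDerivAt_pdx (f : ℝ × ℝ → ℝ) (p : ℝ × ℝ) (hf : DifferentiableAt ℝ f p) :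
    HasDerivAt (fun x => f (x, p.2)) (fderiv ℝ f p (1, 0)) p.1 := by
  have h1 : HasDerivAt (fun x : ℝ => (x, p.2)) ((1:ℝ), (0:ℝ)) p.1 :=
    (hasDerivAt_id p.1).prodMk (hasDerivAt_const p.1 p.2)
  have := hf.hasFDerivAt.comp_hasDerivAt p.1 (by simpa using h1)
  simpa [Function.comp_def] using this

lemma pdx_eq (f : ℝ × ℝ → ℝ) (p : ℝ × ℝ) (hf : DifferentiableAt ℝ f p) :
    pdx f p = fderiv ℝ f p (1, 0) := (hasDerivAt_pdx f p hf).deriv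

lemma hasDerivAt_pdx' (f : ℝ × ℝ → ℝ) (p : ℝ × ℝ) (hf : DifferentiableAt ℝ f p) :
    HasDerivAt (fun x => f (x, p.2)) (pdx f p) p.1 := by
  rw [pdx_eq f p hf]; exact hasDerivAt_pdx f p hf

lemma hasDerivAt_pdt (f : ℝ × ℝ → ℝ) (p : ℝ × ℝ) (hf : DifferentiableAt ℝ f p) :
    HasDerivAt (fun t => f (p.1, t)) (fderiv ℝ f p (0, 1)) p.2 := by
  have h1 : HasDerivAt (fun t : ℝ => (p.1, t)) ((0:ℝ), (1:ℝ)) p.2 :=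
    (hasDerivAt_const p.2 p.1).prodMk (hasDerivAt_id p.2)
  have := hf.hasFDerivAt.comp_hasDerivAt p.2 (by simpa using h1)
  simpa [Function.comp_def] using this

lemma pdt_eq (f : ℝ × ℝ → ℝ) (p : ℝ × ℝ) (hf : DifferentiableAt ℝ f p) :
    pdt f p = fderiv ℝ f p (0, 1) := (hasDerivAt_pdt f p hf).deriv

lemma hasDerivAt_pdt' (f : ℝ × ℝ → ℝ) (p : ℝ × ℝ) (hf : DifferentiableAt ℝ f p) :
    HasDerivAt (fun t => f (p.1, t)) (pdt f p) p.2 := by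
  rw [pdt_eq f p hf]; exact hasDerivAt_pdt f p hf

lemma chain (f : ℝ × ℝ → ℝ) (g1 g2 : ℝ → ℝ) (x0 d1 d2 : ℝ)
    (hf : DifferentiableAt ℝ f (g1 x0, g2 x0))
    (h1 : HasDerivAt g1 d1 x0) (h2 : HasDerivAt g2 d2 x0) :
    HasDerivAt (fun x => f (g1 x, g2 x))
      (pdx f (g1 x0, g2 x0) * d1 + pdt f (g1 x0, g2 x0) * d2) x0 := by
  have hp : HasDerivAt (fun x => (g1 x, g2 x)) ((d1, d2) : ℝ × ℝ) x0 := h1.prodMk h2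
  have := hf.hasFDerivAt.comp_hasDerivAt x0 hp
  have hval : fderiv ℝ f (g1 x0, g2 x0) (d1, d2)
      = pdx f (g1 x0, g2 x0) * d1 + pdt f (g1 x0, g2 x0) * d2 := by
    have h : ((d1, d2) : ℝ × ℝ) = d1 • ((1:ℝ), (0:ℝ)) + d2 • ((0:ℝ), (1:ℝ)) := by
      simp [Prod.ext_iff]
    rw [h, map_add, _root_.map_smul, _root_.map_smul, pdx_eq f _ hf, pdt_eq f _ hf]
    simp [mul_comm]
  simpa [hval, Function.comp_def] using this

lemma pdx_smooth (f : ℝ × ℝ → ℝ) (hf : ContDiff ℝ (⊤ : ℕ∞) f) : ContDiff ℝ (⊤ : ℕ∞) (pdx f) := by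
  have : pdx f = fun p => fderiv ℝ f p (1, 0) := by
    funext p; exact pdx_eq f p (hf.differentiable (by simp) p)
  rw [this]
  exact (hf.fderiv_right (by simp)).clm_apply contDiff_const

lemma transport (b r1 r2 γ c0 c1 c2 : ℝ) (w' z' f : ℝ × ℝ → ℝ)
    (hw' : ContDiff ℝ (⊤ : ℕ∞) w') (hz' : ContDiff ℝ (⊤ : ℕ∞) z') (hf : ContDiff ℝ (⊤ : ℕ∞) f)
    (Ψ : ℝ × ℝ → ℝ × ℝ)
    (hΨ : Ψ = fun p => (b * p.1 + r1 * w' p + r2 * z' p, γ * p.2))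
    (hdef : ∀ p : ℝ × ℝ, f (Ψ p) = c0 * p.1 + c1 * w' p + c2 * z' p) :
    (∀ q : ℝ × ℝ, pdx f (Ψ q) * (b + r1 * pdx w' q + r2 * pdx z' q)
        = c0 + c1 * pdx w' q + c2 * pdx z' q)
    ∧ (∀ q : ℝ × ℝ, pdx f (Ψ q) * (r1 * pdt w' q + r2 * pdt z' q) + pdt f (Ψ q) * γ
        = c1 * pdt w' q + c2 * pdt z' q) := by
  have dw' := hw'.differentiable (by simp)
  have dz' := hz'.differentiable (by simp)
  have df := hf.differentiable (by simp)
  constructor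
  · intro q
    have hg1 : HasDerivAt (fun x => b * x + r1 * w' (x, q.2) + r2 * z' (x, q.2))
        (b + r1 * pdx w' q + r2 * pdx z' q) q.1 := by
      have := (((hasDerivAt_id q.1).const_mul b).add
        ((hasDerivAt_pdx' w' q (dw' q)).const_mul r1)).add
        ((hasDerivAt_pdx' z' q (dz' q)).const_mul r2)
      simp only [Pi.add_def, id_eq] at this
      exact this.congr_deriv (by ring)
    have hg2 : HasDerivAt (fun _ : ℝ => γ * q.2) 0 q.1 := hasDerivAt_const _ _
    have hpt : ((fun x => b * x + r1 * w' (x, q.2) + r2 * z' (x, q.2)) q.1,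
        (fun _ : ℝ => γ * q.2) q.1) = Ψ q := by
      rw [hΨ]
    have hL := chain f _ _ q.1 _ _ (hpt ▸ df (Ψ q)) hg1 hg2
    rw [hpt] at hL
    have hfun : (fun x => f ((fun x => b * x + r1 * w' (x, q.2) + r2 * z' (x, q.2)) x,
        (fun _ : ℝ => γ * q.2) x))
        = fun x => c0 * x + c1 * w' (x, q.2) + c2 * z' (x, q.2) := by
      funext x
      have := hdef (x, q.2)
      simpa [hΨ] using this
    rw [hfun] at hL
    have hR : HasDerivAt (fun x => c0 * x + c1 * w' (x, q.2) + c2 * z' (x, q.2))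
        (c0 + c1 * pdx w' q + c2 * pdx z' q) q.1 := by
      have := (((hasDerivAt_id q.1).const_mul c0).add
        ((hasDerivAt_pdx' w' q (dw' q)).const_mul c1)).add
        ((hasDerivAt_pdx' z' q (dz' q)).const_mul c2)
      simp only [Pi.add_def, id_eq] at this
      exact this.congr_deriv (by ring)
    have := hL.unique hR
    linarith [this]
  · intro q
    have hg1 : HasDerivAt (fun t => b * q.1 + r1 * w' (q.1, t) + r2 * z' (q.1, t))
        (r1 * pdt w' q + r2 * pdt z' q) q.2 := by
      have := ((hasDerivAt_const q.2 (b * q.1)).add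
        ((hasDerivAt_pdt' w' q (dw' q)).const_mul r1)).add
        ((hasDerivAt_pdt' z' q (dz' q)).const_mul r2)
      simp only [Pi.add_def, id_eq] at this
      exact this.congr_deriv (by ring)
    have hg2 : HasDerivAt (fun t : ℝ => γ * t) γ q.2 := by
      simpa using (hasDerivAt_id q.2).const_mul γ
    have hpt : ((fun t => b * q.1 + r1 * w' (q.1, t) + r2 * z' (q.1, t)) q.2,
        (fun t : ℝ => γ * t) q.2) = Ψ q := by
      rw [hΨ]
    have hL := chain f _ _ q.2 _ _ (hpt ▸ df (Ψ q)) hg1 hg2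
    rw [hpt] at hL
    have hfun : (fun t => f ((fun t => b * q.1 + r1 * w' (q.1, t) + r2 * z' (q.1, t)) t,
        (fun t : ℝ => γ * t) t))
        = fun t => c0 * q.1 + c1 * w' (q.1, t) + c2 * z' (q.1, t) := by
      funext t
      have := hdef (q.1, t)
      simpa [hΨ] using this
    rw [hfun] at hL
    have hR : HasDerivAt (fun t => c0 * q.1 + c1 * w' (q.1, t) + c2 * z' (q.1, t))
        (c1 * pdt w' q + c2 * pdt z' q) q.2 := by
      have := ((hasDerivAt_const q.2 (c0 * q.1)).add
        ((hasDerivAt_pdt' w' q (dw' q)).const_mul c1)).add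
        ((hasDerivAt_pdt' z' q (dz' q)).const_mul c2)
      simp only [Pi.add_def, id_eq] at this
      exact this.congr_deriv (by ring)
    exact hL.unique hR
lemma transport2 (b r1 r2 γ c0 c1 c2 : ℝ) (w' z' f : ℝ × ℝ → ℝ)
    (hw' : ContDiff ℝ (⊤ : ℕ∞) w') (hz' : ContDiff ℝ (⊤ : ℕ∞) z') (hf : ContDiff ℝ (⊤ : ℕ∞) f)
    (Ψ : ℝ × ℝ → ℝ × ℝ)
    (hΨ : Ψ = fun p => (b * p.1 + r1 * w' p + r2 * z' p, γ * p.2))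
    (hkey : ∀ q : ℝ × ℝ, pdx f (Ψ q) * (b + r1 * pdx w' q + r2 * pdx z' q)
        = c0 + c1 * pdx w' q + c2 * pdx z' q) :
    ∀ q : ℝ × ℝ,
      (pdx (pdx f) (Ψ q) * (b + r1 * pdx w' q + r2 * pdx z' q))
          * (b + r1 * pdx w' q + r2 * pdx z' q)
        + pdx f (Ψ q) * (r1 * pdx (pdx w') q + r2 * pdx (pdx z') q)
      = c1 * pdx (pdx w') q + c2 * pdx (pdx z') q := by
  intro q
  have dw' := hw'.differentiable (by simp)
  have dz' := hz'.differentiable (by simp)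
  have dfx := (pdx_smooth f hf).differentiable (by simp)
  have dwx := (pdx_smooth w' hw').differentiable (by simp)
  have dzx := (pdx_smooth z' hz').differentiable (by simp)
  have hg1 : HasDerivAt (fun x => b * x + r1 * w' (x, q.2) + r2 * z' (x, q.2))
      (b + r1 * pdx w' q + r2 * pdx z' q) q.1 := by
    have := (((hasDerivAt_id q.1).const_mul b).add
      ((hasDerivAt_pdx' w' q (dw' q)).const_mul r1)).add
      ((hasDerivAt_pdx' z' q (dz' q)).const_mul r2)
    simp only [Pi.add_def, id_eq] at this
    exact this.congr_deriv (by ring)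
  have hg2 : HasDerivAt (fun _ : ℝ => γ * q.2) 0 q.1 := hasDerivAt_const _ _
  have hpt : ((fun x => b * x + r1 * w' (x, q.2) + r2 * z' (x, q.2)) q.1,
      (fun _ : ℝ => γ * q.2) q.1) = Ψ q := by
    rw [hΨ]
  -- derivative of x ↦ pdx f (Ψ (x, q.2))
  have h1 := chain (pdx f) _ _ q.1 _ _ (hpt ▸ dfx (Ψ q)) hg1 hg2
  rw [hpt] at h1
  have hfun1 : (fun x => pdx f ((fun x => b * x + r1 * w' (x, q.2) + r2 * z' (x, q.2)) x,
      (fun _ : ℝ => γ * q.2) x)) = fun x => pdx f (Ψ (x, q.2)) := by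
    funext x; rw [hΨ]
  rw [hfun1] at h1
  -- derivative of second factor
  have h2 : HasDerivAt (fun x => b + r1 * pdx w' (x, q.2) + r2 * pdx z' (x, q.2))
      (r1 * pdx (pdx w') q + r2 * pdx (pdx z') q) q.1 := by
    have := ((hasDerivAt_const q.1 b).add
      ((hasDerivAt_pdx' (pdx w') q (dwx q)).const_mul r1)).add
      ((hasDerivAt_pdx' (pdx z') q (dzx q)).const_mul r2)
    simp only [Pi.add_def, id_eq] at this
    exact this.congr_deriv (by ring)
  have hL := h1.mul h2
  simp only [Pi.mul_def] at hL
  have hfun2 : (fun x => pdx f (Ψ (x, q.2)) * (b + r1 * pdx w' (x, q.2) + r2 * pdx z' (x, q.2)))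
      = fun x => c0 + c1 * pdx w' (x, q.2) + c2 * pdx z' (x, q.2) := by
    funext x; exact hkey (x, q.2)
  rw [hfun2] at hL
  have hR : HasDerivAt (fun x => c0 + c1 * pdx w' (x, q.2) + c2 * pdx z' (x, q.2))
      (c1 * pdx (pdx w') q + c2 * pdx (pdx z') q) q.1 := by
    have := ((hasDerivAt_const q.1 c0).add
      ((hasDerivAt_pdx' (pdx w') q (dwx q)).const_mul c1)).add
      ((hasDerivAt_pdx' (pdx z') q (dzx q)).const_mul c2)
    simp only [Pi.add_def, id_eq] at this
    exact this.congr_deriv (by ring)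
  have huniq := hL.unique hR
  have hq : ((q.1 : ℝ), q.2) = q := rfl
  rw [hq] at huniq
  -- huniq : (pdx(pdx f)(Ψ q)*D + pdt(pdx f)(Ψ q)*0)*D + pdx f (Ψ q)*(...) = ...
  nlinarith [huniq]
set_option maxHeartbeats 2000000 in
/-- Theorem 1, linearizing direction: every smooth solution of the linear
auxiliary system `w'_{x'} = u'`, `w'_{t'} = μ1 u'_{x'} + μ2 v'_{x'}`, `z'_{x'} = v'`,
`z'_{t'} = μ3 u'_{x'} + μ4 v'_{x'}`, transported by the inverse equivalence transformation
`x = b·x' + r1·w' + r2·z'`, `t = γ·t'`, `w = s1·x' + b1·w' + b2·z'`, `z = s2·x' + b3·w' + b4·z'`,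
yields a solution `(u,v,w,z)` of the nonlinear second-generation potential system with
coefficient matrix `F(u,v) = H(u,v)⁻¹·Λ·H(u,v)/(γ(a + p1·u + p2·v)²)`, where
`H(u,v) = (a + p1·u + p2·v)·A − (A·(u,v)ᵀ + q)·pᵀ`. -/
theorem theorem1_linearizing_direction
    (a γ p1 p2 q1 q2 b r1 r2 s1 s2 a1 a2 a3 a4 b1 b2 b3 b4 μ1 μ2 μ3 μ4 : ℝ)
    (hγ : γ ≠ 0)
    (A B Λ : Matrix (Fin 2) (Fin 2) ℝ)
    (hA : A = !![a1, a2; a3, a4]) (hB : B = !![b1, b2; b3, b4])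
    (hΛ : Λ = !![μ1, μ2; μ3, μ4])
    (M N : Matrix (Fin 3) (Fin 3) ℝ)
    (hM : M = !![a, p1, p2; q1, a1, a2; q2, a3, a4])
    (hN : N = !![b, r1, r2; s1, b1, b2; s2, b3, b4])
    (hMN : M * N = 1) (hNM : N * M = 1)
    (H : ℝ → ℝ → Matrix (Fin 2) (Fin 2) ℝ)
    (hH : ∀ α β : ℝ, H α β =
      (a + p1 * α + p2 * β) • A - vecMulVec (A.mulVec ![α, β] + ![q1, q2]) ![p1, p2])
    (F : ℝ → ℝ → Matrix (Fin 2) (Fin 2) ℝ)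
    (hF : ∀ α β : ℝ, F α β =
      (γ * (a + p1 * α + p2 * β) ^ 2)⁻¹ • ((H α β)⁻¹ * Λ * H α β))
    (u' v' w' z' : ℝ × ℝ → ℝ)
    (hu' : ContDiff ℝ (⊤ : ℕ∞) u') (hv' : ContDiff ℝ (⊤ : ℕ∞) v')
    (hw' : ContDiff ℝ (⊤ : ℕ∞) w') (hz' : ContDiff ℝ (⊤ : ℕ∞) z')
    (heq1 : ∀ p : ℝ × ℝ, pdx w' p = u' p)
    (heq2 : ∀ p : ℝ × ℝ, pdt w' p = μ1 * pdx u' p + μ2 * pdx v' p)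
    (heq3 : ∀ p : ℝ × ℝ, pdx z' p = v' p)
    (heq4 : ∀ p : ℝ × ℝ, pdt z' p = μ3 * pdx u' p + μ4 * pdx v' p)
    (Ψ : ℝ × ℝ → ℝ × ℝ)
    (hΨ : Ψ = fun p => (b * p.1 + r1 * w' p + r2 * z' p, γ * p.2))
    (Ψinv : ℝ × ℝ → ℝ × ℝ)
    (hl : Function.LeftInverse Ψinv Ψ) (hr : Function.RightInverse Ψinv Ψ)
    (hΨinv : ContDiff ℝ (⊤ : ℕ∞) Ψinv)
    (w z : ℝ × ℝ → ℝ) (hws : ContDiff ℝ (⊤ : ℕ∞) w) (hzs : ContDiff ℝ (⊤ : ℕ∞) z)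
    (hwdef : ∀ p : ℝ × ℝ, w (Ψ p) = s1 * p.1 + b1 * w' p + b2 * z' p)
    (hzdef : ∀ p : ℝ × ℝ, z (Ψ p) = s2 * p.1 + b3 * w' p + b4 * z' p)
    (u v : ℝ × ℝ → ℝ) (hu : u = pdx w) (hv : v = pdx z)
    (hden : ∀ p : ℝ × ℝ, a + p1 * u p + p2 * v p ≠ 0)
    (hHinv : ∀ p : ℝ × ℝ, IsUnit (H (u p) (v p)).det) :
    (∀ p : ℝ × ℝ, pdx w p = u p) ∧
    (∀ p : ℝ × ℝ, pdt w p =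
      F (u p) (v p) 0 0 * pdx u p + F (u p) (v p) 0 1 * pdx v p) ∧
    (∀ p : ℝ × ℝ, pdx z p = v p) ∧
    (∀ p : ℝ × ℝ, pdt z p =
      F (u p) (v p) 1 0 * pdx u p + F (u p) (v p) 1 1 * pdx v p) := by
  -- entries of M * N = 1
  rw [hM, hN] at hMN
  have R1 : a*b + p1*s1 + p2*s2 = 1 := by
    have := congrFun (congrFun hMN 0) 0
    simpa [Matrix.mul_apply, Fin.sum_univ_three, Matrix.one_apply] using this
  have R2 : a*r1 + p1*b1 + p2*b3 = 0 := by
    have := congrFun (congrFun hMN 0) 1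
    simpa [Matrix.mul_apply, Fin.sum_univ_three, Matrix.one_apply] using this
  have R3 : a*r2 + p1*b2 + p2*b4 = 0 := by
    have := congrFun (congrFun hMN 0) 2
    simpa [Matrix.mul_apply, Fin.sum_univ_three, Matrix.one_apply] using this
  have R5 : q1*r1 + a1*b1 + a2*b3 = 1 := by
    have := congrFun (congrFun hMN 1) 1
    simpa [Matrix.mul_apply, Fin.sum_univ_three, Matrix.one_apply] using this
  have R6 : q1*r2 + a1*b2 + a2*b4 = 0 := by
    have := congrFun (congrFun hMN 1) 2
    simpa [Matrix.mul_apply, Fin.sum_univ_three, Matrix.one_apply] using this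
  have R8 : q2*r1 + a3*b1 + a4*b3 = 0 := by
    have := congrFun (congrFun hMN 2) 1
    simpa [Matrix.mul_apply, Fin.sum_univ_three, Matrix.one_apply] using this
  have R9 : q2*r2 + a3*b2 + a4*b4 = 1 := by
    have := congrFun (congrFun hMN 2) 2
    simpa [Matrix.mul_apply, Fin.sum_univ_three, Matrix.one_apply] using this
  -- first-order transported identities
  obtain ⟨keyw_x, keyw_t⟩ := transport b r1 r2 γ s1 b1 b2 w' z' w hw' hz' hws Ψ hΨ hwdef
  obtain ⟨keyz_x, keyz_t⟩ := transport b r1 r2 γ s2 b3 b4 w' z' z hw' hz' hzs Ψ hΨ hzdef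
  have key2w := transport2 b r1 r2 γ s1 b1 b2 w' z' w hw' hz' hws Ψ hΨ keyw_x
  have key2z := transport2 b r1 r2 γ s2 b3 b4 w' z' z hw' hz' hzs Ψ hΨ keyz_x
  have hpw : pdx w' = u' := funext heq1
  have hpz : pdx z' = v' := funext heq3
  simp only [hpw, hpz, ← hu] at keyw_x key2w keyw_t
  simp only [hpw, hpz, ← hv] at keyz_x key2z keyz_t
  have main : ∀ p : ℝ × ℝ,
      (pdt w p = F (u p) (v p) 0 0 * pdx u p + F (u p) (v p) 0 1 * pdx v p) ∧
      (pdt z p = F (u p) (v p) 1 0 * pdx u p + F (u p) (v p) 1 1 * pdx v p) := by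
    intro p
    obtain ⟨q, hpq⟩ : ∃ q, Ψ q = p := ⟨Ψinv p, hr p⟩
    subst hpq
    have e1 := keyw_x q
    have e2 := keyz_x q
    have e4 := key2w q
    have e5 := key2z q
    have e6 := keyw_t q
    have e7 := keyz_t q
    rw [heq2 q, heq4 q] at e6 e7
    have hE : a + p1 * u (Ψ q) + p2 * v (Ψ q) ≠ 0 := hden (Ψ q)
    have e3 : (a + p1 * u (Ψ q) + p2 * v (Ψ q)) * (b + r1 * u' q + r2 * v' q) = 1 := by
      linear_combination R1 + u' q * R2 + v' q * R3 + p1 * e1 + p2 * e2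
    have hux : pdx u (Ψ q) = (a + p1 * u (Ψ q) + p2 * v (Ψ q))^2 *
        ((b1 - u (Ψ q) * r1) * pdx u' q + (b2 - u (Ψ q) * r2) * pdx v' q) := by
      linear_combination (a + p1 * u (Ψ q) + p2 * v (Ψ q))^2 * e4
        - pdx u (Ψ q) * ((a + p1 * u (Ψ q) + p2 * v (Ψ q)) * (b + r1 * u' q + r2 * v' q) + 1) * e3
    have hvx : pdx v (Ψ q) = (a + p1 * u (Ψ q) + p2 * v (Ψ q))^2 *
        ((b3 - v (Ψ q) * r1) * pdx u' q + (b4 - v (Ψ q) * r2) * pdx v' q) := by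
      linear_combination (a + p1 * u (Ψ q) + p2 * v (Ψ q))^2 * e5
        - pdx v (Ψ q) * ((a + p1 * u (Ψ q) + p2 * v (Ψ q)) * (b + r1 * u' q + r2 * v' q) + 1) * e3
    -- abbreviations as plain terms
    have kg1 : ((a + p1 * u (Ψ q) + p2 * v (Ψ q)) * a1 - (a1 * u (Ψ q) + a2 * v (Ψ q) + q1) * p1)
          * (b1 - u (Ψ q) * r1)
        + ((a + p1 * u (Ψ q) + p2 * v (Ψ q)) * a2 - (a1 * u (Ψ q) + a2 * v (Ψ q) + q1) * p2)
          * (b3 - v (Ψ q) * r1) = a + p1 * u (Ψ q) + p2 * v (Ψ q) := by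
      linear_combination (a + p1 * u (Ψ q) + p2 * v (Ψ q)) * R5
        - (a1 * u (Ψ q) + a2 * v (Ψ q) + q1) * R2
    have kg2 : ((a + p1 * u (Ψ q) + p2 * v (Ψ q)) * a1 - (a1 * u (Ψ q) + a2 * v (Ψ q) + q1) * p1)
          * (b2 - u (Ψ q) * r2)
        + ((a + p1 * u (Ψ q) + p2 * v (Ψ q)) * a2 - (a1 * u (Ψ q) + a2 * v (Ψ q) + q1) * p2)
          * (b4 - v (Ψ q) * r2) = 0 := by
      linear_combination (a + p1 * u (Ψ q) + p2 * v (Ψ q)) * R6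
        - (a1 * u (Ψ q) + a2 * v (Ψ q) + q1) * R3
    have kg3 : ((a + p1 * u (Ψ q) + p2 * v (Ψ q)) * a3 - (a3 * u (Ψ q) + a4 * v (Ψ q) + q2) * p1)
          * (b1 - u (Ψ q) * r1)
        + ((a + p1 * u (Ψ q) + p2 * v (Ψ q)) * a4 - (a3 * u (Ψ q) + a4 * v (Ψ q) + q2) * p2)
          * (b3 - v (Ψ q) * r1) = 0 := by
      linear_combination (a + p1 * u (Ψ q) + p2 * v (Ψ q)) * R8
        - (a3 * u (Ψ q) + a4 * v (Ψ q) + q2) * R2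
    have kg4 : ((a + p1 * u (Ψ q) + p2 * v (Ψ q)) * a3 - (a3 * u (Ψ q) + a4 * v (Ψ q) + q2) * p1)
          * (b2 - u (Ψ q) * r2)
        + ((a + p1 * u (Ψ q) + p2 * v (Ψ q)) * a4 - (a3 * u (Ψ q) + a4 * v (Ψ q) + q2) * p2)
          * (b4 - v (Ψ q) * r2) = a + p1 * u (Ψ q) + p2 * v (Ψ q) := by
      linear_combination (a + p1 * u (Ψ q) + p2 * v (Ψ q)) * R9
        - (a3 * u (Ψ q) + a4 * v (Ψ q) + q2) * R3
    -- explicit form of H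
    have hmv : (!![a1, a2; a3, a4]).mulVec ![u (Ψ q), v (Ψ q)]
        = ![a1 * u (Ψ q) + a2 * v (Ψ q), a3 * u (Ψ q) + a4 * v (Ψ q)] := by
      funext i
      fin_cases i <;> simp [Matrix.mulVec, dotProduct, Fin.sum_univ_two]
    have hK : H (u (Ψ q)) (v (Ψ q)) =
        !![(a + p1 * u (Ψ q) + p2 * v (Ψ q)) * a1 - (a1 * u (Ψ q) + a2 * v (Ψ q) + q1) * p1,
           (a + p1 * u (Ψ q) + p2 * v (Ψ q)) * a2 - (a1 * u (Ψ q) + a2 * v (Ψ q) + q1) * p2;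
           (a + p1 * u (Ψ q) + p2 * v (Ψ q)) * a3 - (a3 * u (Ψ q) + a4 * v (Ψ q) + q2) * p1,
           (a + p1 * u (Ψ q) + p2 * v (Ψ q)) * a4 - (a3 * u (Ψ q) + a4 * v (Ψ q) + q2) * p2] := by
      rw [hH, hA, hmv]
      ext i j
      fin_cases i <;> fin_cases j <;> simp [Matrix.vecMulVec_apply]
    have hKG : H (u (Ψ q)) (v (Ψ q)) *
        !![b1 - u (Ψ q) * r1, b2 - u (Ψ q) * r2; b3 - v (Ψ q) * r1, b4 - v (Ψ q) * r2]
        = (a + p1 * u (Ψ q) + p2 * v (Ψ q)) • 1 := by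
      rw [hK]
      ext i j
      fin_cases i <;> fin_cases j <;>
        simp [Matrix.mul_apply, Fin.sum_univ_two, Matrix.one_apply]
      · linear_combination kg1
      · linear_combination kg2
      · linear_combination kg3
      · linear_combination kg4
    have hKinv : (H (u (Ψ q)) (v (Ψ q)))⁻¹ = (a + p1 * u (Ψ q) + p2 * v (Ψ q))⁻¹ •
        !![b1 - u (Ψ q) * r1, b2 - u (Ψ q) * r2; b3 - v (Ψ q) * r1, b4 - v (Ψ q) * r2] := by
      apply Matrix.inv_eq_right_inv
      rw [Matrix.mul_smul, hKG, smul_smul, inv_mul_cancel₀ hE, one_smul]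
    have hF00 : γ * (a + p1 * u (Ψ q) + p2 * v (Ψ q))^3 * F (u (Ψ q)) (v (Ψ q)) 0 0
        = ((b1 - u (Ψ q) * r1) * μ1 + (b2 - u (Ψ q) * r2) * μ3) *
            ((a + p1 * u (Ψ q) + p2 * v (Ψ q)) * a1 - (a1 * u (Ψ q) + a2 * v (Ψ q) + q1) * p1)
        + ((b1 - u (Ψ q) * r1) * μ2 + (b2 - u (Ψ q) * r2) * μ4) *
            ((a + p1 * u (Ψ q) + p2 * v (Ψ q)) * a3 - (a3 * u (Ψ q) + a4 * v (Ψ q) + q2) * p1) := by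
      rw [hF, hKinv, hK, hΛ]
      simp [Matrix.mul_apply, Fin.sum_univ_two, Matrix.smul_apply]
      field_simp
    have hF01 : γ * (a + p1 * u (Ψ q) + p2 * v (Ψ q))^3 * F (u (Ψ q)) (v (Ψ q)) 0 1
        = ((b1 - u (Ψ q) * r1) * μ1 + (b2 - u (Ψ q) * r2) * μ3) *
            ((a + p1 * u (Ψ q) + p2 * v (Ψ q)) * a2 - (a1 * u (Ψ q) + a2 * v (Ψ q) + q1) * p2)
        + ((b1 - u (Ψ q) * r1) * μ2 + (b2 - u (Ψ q) * r2) * μ4) *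
            ((a + p1 * u (Ψ q) + p2 * v (Ψ q)) * a4 - (a3 * u (Ψ q) + a4 * v (Ψ q) + q2) * p2) := by
      rw [hF, hKinv, hK, hΛ]
      simp [Matrix.mul_apply, Fin.sum_univ_two, Matrix.smul_apply]
      field_simp
    have hF10 : γ * (a + p1 * u (Ψ q) + p2 * v (Ψ q))^3 * F (u (Ψ q)) (v (Ψ q)) 1 0
        = ((b3 - v (Ψ q) * r1) * μ1 + (b4 - v (Ψ q) * r2) * μ3) *
            ((a + p1 * u (Ψ q) + p2 * v (Ψ q)) * a1 - (a1 * u (Ψ q) + a2 * v (Ψ q) + q1) * p1)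
        + ((b3 - v (Ψ q) * r1) * μ2 + (b4 - v (Ψ q) * r2) * μ4) *
            ((a + p1 * u (Ψ q) + p2 * v (Ψ q)) * a3 - (a3 * u (Ψ q) + a4 * v (Ψ q) + q2) * p1) := by
      rw [hF, hKinv, hK, hΛ]
      simp [Matrix.mul_apply, Fin.sum_univ_two, Matrix.smul_apply]
      field_simp
    have hF11 : γ * (a + p1 * u (Ψ q) + p2 * v (Ψ q))^3 * F (u (Ψ q)) (v (Ψ q)) 1 1
        = ((b3 - v (Ψ q) * r1) * μ1 + (b4 - v (Ψ q) * r2) * μ3) *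
            ((a + p1 * u (Ψ q) + p2 * v (Ψ q)) * a2 - (a1 * u (Ψ q) + a2 * v (Ψ q) + q1) * p2)
        + ((b3 - v (Ψ q) * r1) * μ2 + (b4 - v (Ψ q) * r2) * μ4) *
            ((a + p1 * u (Ψ q) + p2 * v (Ψ q)) * a4 - (a3 * u (Ψ q) + a4 * v (Ψ q) + q2) * p2) := by
      rw [hF, hKinv, hK, hΛ]
      simp [Matrix.mul_apply, Fin.sum_univ_two, Matrix.smul_apply]
      field_simp
    have hKu : ((a + p1 * u (Ψ q) + p2 * v (Ψ q)) * a1 - (a1 * u (Ψ q) + a2 * v (Ψ q) + q1) * p1)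
          * pdx u (Ψ q)
        + ((a + p1 * u (Ψ q) + p2 * v (Ψ q)) * a2 - (a1 * u (Ψ q) + a2 * v (Ψ q) + q1) * p2)
          * pdx v (Ψ q)
        = (a + p1 * u (Ψ q) + p2 * v (Ψ q))^3 * pdx u' q := by
      linear_combination
        ((a + p1 * u (Ψ q) + p2 * v (Ψ q)) * a1 - (a1 * u (Ψ q) + a2 * v (Ψ q) + q1) * p1) * hux
        + ((a + p1 * u (Ψ q) + p2 * v (Ψ q)) * a2 - (a1 * u (Ψ q) + a2 * v (Ψ q) + q1) * p2) * hvx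
        + (a + p1 * u (Ψ q) + p2 * v (Ψ q))^2 * pdx u' q * kg1
        + (a + p1 * u (Ψ q) + p2 * v (Ψ q))^2 * pdx v' q * kg2
    have hKv : ((a + p1 * u (Ψ q) + p2 * v (Ψ q)) * a3 - (a3 * u (Ψ q) + a4 * v (Ψ q) + q2) * p1)
          * pdx u (Ψ q)
        + ((a + p1 * u (Ψ q) + p2 * v (Ψ q)) * a4 - (a3 * u (Ψ q) + a4 * v (Ψ q) + q2) * p2)
          * pdx v (Ψ q)
        = (a + p1 * u (Ψ q) + p2 * v (Ψ q))^3 * pdx v' q := by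
      linear_combination
        ((a + p1 * u (Ψ q) + p2 * v (Ψ q)) * a3 - (a3 * u (Ψ q) + a4 * v (Ψ q) + q2) * p1) * hux
        + ((a + p1 * u (Ψ q) + p2 * v (Ψ q)) * a4 - (a3 * u (Ψ q) + a4 * v (Ψ q) + q2) * p2) * hvx
        + (a + p1 * u (Ψ q) + p2 * v (Ψ q))^2 * pdx u' q * kg3
        + (a + p1 * u (Ψ q) + p2 * v (Ψ q))^2 * pdx v' q * kg4
    have hne : γ * (a + p1 * u (Ψ q) + p2 * v (Ψ q))^3 ≠ 0 := mul_ne_zero hγ (pow_ne_zero 3 hE)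
    constructor
    · apply mul_left_cancel₀ hne
      linear_combination (- pdx u (Ψ q)) * hF00 + (- pdx v (Ψ q)) * hF01
        - ((b1 - u (Ψ q) * r1) * μ1 + (b2 - u (Ψ q) * r2) * μ3) * hKu
        - ((b1 - u (Ψ q) * r1) * μ2 + (b2 - u (Ψ q) * r2) * μ4) * hKv
        + (a + p1 * u (Ψ q) + p2 * v (Ψ q))^3 * e6
    · apply mul_left_cancel₀ hne
      linear_combination (- pdx u (Ψ q)) * hF10 + (- pdx v (Ψ q)) * hF11
        - ((b3 - v (Ψ q) * r1) * μ1 + (b4 - v (Ψ q) * r2) * μ3) * hKu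
        - ((b3 - v (Ψ q) * r1) * μ2 + (b4 - v (Ψ q) * r2) * μ4) * hKv
        + (a + p1 * u (Ψ q) + p2 * v (Ψ q))^3 * e7
  exact ⟨fun p => by rw [hu], fun p => (main p).1, fun p => by rw [hv], fun p => (main p).2⟩
end

section
/- (Theorem 2, linearizing direction.) Let a, γ ∈ ℝ with γ ≠ 0, p = (p1,p2), q = (q1,q2) ∈ ℝ², and let A = [[a1,a2],[a3,a4]] and Λ = [[μ1,μ2],[μ3,μ4]] be 2×2 real matrices such that the 3×3 block matrix M = [[a, pᵀ],[q, A]] is invertible. For w ∈ ℝ² set H(w) = (a + pᵀw)·A − (A·w + q)·pᵀ. Let w, z : ℝ² → ℝ be smooth functions of (x,t) such that a + p1·w_x + p2·z_x vanishes nowhere, H((w_x,z_x)) is invertible at every point, and (w,z) satisfies the potential system w_t = f·w_xx + g·z_xx, z_t = h·w_xx + k·z_xx, where [[f, g],[h, k]] = H((w_x,z_x))⁻¹·Λ·H((w_x,z_x)) / (γ·(a + p1·w_x + p2·z_x)²). Suppose the map Φ : ℝ² → ℝ², Φ(x,t) = (a·x + p1·w(x,t) + p2·z(x,t), t/γ),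 is a bijection with smooth inverse, and define w', z' : ℝ² → ℝ by w'(Φ(x,t)) = q1·x + a1·w(x,t) + a2·z(x,t) and z'(Φ(x,t)) = q2·x + a3·w(x,t) + a4·z(x,t). Then (w', z') satisfies the linear system w'_{t'} = μ1·w'_{x'x'} + μ2·z'_{x'x'}, z'_{t'} = μ3·w'_{x'x'} + μ4·z'_{x'x'}. -/
open Matrix

/-- Second partial derivative with respect to the first variable. -/
noncomputable def pdxx (f : ℝ × ℝ → ℝ) : ℝ × ℝ → ℝ := pdx (pdx f)

lemma pdx_eq_fderiv_s6 {f : ℝ × ℝ → ℝ} (hf : ContDiff ℝ (⊤ : ℕ∞) f) (p : ℝ × ℝ) :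
    pdx f p = fderiv ℝ f p ((1:ℝ), (0:ℝ)) := by
  have h1 : HasDerivAt (fun x : ℝ => (x, p.2)) ((1:ℝ), (0:ℝ)) p.1 :=
    (hasDerivAt_id p.1).prodMk (hasDerivAt_const p.1 p.2)
  have hd := ((hf.differentiable (by simp)) p).hasFDerivAt
  have h2 := hd.comp_hasDerivAt p.1 h1
  exact h2.deriv

lemma pdt_eq_fderiv_s6 {f : ℝ × ℝ → ℝ} (hf : ContDiff ℝ (⊤ : ℕ∞) f) (p : ℝ × ℝ) :
    pdt f p = fderiv ℝ f p ((0:ℝ), (1:ℝ)) := by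
  have h1 : HasDerivAt (fun t : ℝ => (p.1, t)) ((0:ℝ), (1:ℝ)) p.2 :=
    (hasDerivAt_const p.2 p.1).prodMk (hasDerivAt_id p.2)
  have hd := ((hf.differentiable (by simp)) p).hasFDerivAt
  have h2 := hd.comp_hasDerivAt p.2 h1
  exact h2.deriv

lemma hasDerivAt_comp2 {f : ℝ × ℝ → ℝ} (hf : ContDiff ℝ (⊤ : ℕ∞) f) {α β : ℝ → ℝ} {α' β' s : ℝ}
    (hα : HasDerivAt α α' s) (hβ : HasDerivAt β β' s) :
    HasDerivAt (fun s => f (α s, β s)) (pdx f (α s, β s) * α' + pdt f (α s, β s) * β') s := by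
  have hcurve : HasDerivAt (fun s => (α s, β s)) (α', β') s := hα.prodMk hβ
  have hd := ((hf.differentiable (by simp)) (α s, β s)).hasFDerivAt
  have h2 := hd.comp_hasDerivAt s hcurve
  have e : fderiv ℝ f (α s, β s) (α', β') =
      pdx f (α s, β s) * α' + pdt f (α s, β s) * β' := by
    have hv : (α', β') = α' • ((1:ℝ),(0:ℝ)) + β' • ((0:ℝ),(1:ℝ)) := by
      simp [Prod.ext_iff]
    rw [hv, map_add, _root_.map_smul, _root_.map_smul, pdx_eq_fderiv_s6 hf, pdt_eq_fderiv_s6 hf]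
    simp [mul_comm]
  rw [← e]; exact h2

lemma hasDerivAt_slice_x_s6 {f : ℝ × ℝ → ℝ} (hf : ContDiff ℝ (⊤ : ℕ∞) f) (x c : ℝ) :
    HasDerivAt (fun x => f (x, c)) (pdx f (x, c)) x := by
  have := hasDerivAt_comp2 hf (hasDerivAt_id x) (hasDerivAt_const x c)
  simpa using this

lemma contDiff_pdx_s6 {f : ℝ × ℝ → ℝ} (hf : ContDiff ℝ (⊤ : ℕ∞) f) : ContDiff ℝ (⊤ : ℕ∞) (pdx f) := by
  have : pdx f = fun p => (fderiv ℝ f p) ((1:ℝ), (0:ℝ)) := funext (pdx_eq_fderiv_s6 hf)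
  rw [this]
  exact (ContinuousLinearMap.apply ℝ ℝ ((1:ℝ),(0:ℝ))).contDiff.comp (hf.fderiv_right (by simp))

/-- Theorem 2, linearizing direction: if `(w,z)` solves the nonlinear potential
system `w_t = f·w_xx + g·z_xx`, `z_t = h·w_xx + k·z_xx` with coefficient matrix
`[[f,g],[h,k]] = H(w_x,z_x)⁻¹·Λ·H(w_x,z_x)/(γ(a + pᵀ(w_x,z_x))²)`,
`H(w) = (a + pᵀw)·A − (A·w + q)·pᵀ`, then the transformed variables
`w' = q1·x + a1·w + a2·z`, `z' = q2·x + a3·w + a4·z` of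
`x' = a·x + p1·w + p2·z`, `t' = t/γ` solve the linear system
`w'_{t'} = μ1·w'_{x'x'} + μ2·z'_{x'x'}`, `z'_{t'} = μ3·w'_{x'x'} + μ4·z'_{x'x'}`. -/
theorem theorem2_linearizing_direction
    (a γ p1 p2 q1 q2 a1 a2 a3 a4 μ1 μ2 μ3 μ4 : ℝ) (hγ : γ ≠ 0)
    (A Λ : Matrix (Fin 2) (Fin 2) ℝ)
    (hA : A = !![a1, a2; a3, a4]) (hΛ : Λ = !![μ1, μ2; μ3, μ4])
    (M : Matrix (Fin 3) (Fin 3) ℝ)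
    (hM : M = !![a, p1, p2; q1, a1, a2; q2, a3, a4])
    (hMinv : IsUnit M.det)
    (H : (Fin 2 → ℝ) → Matrix (Fin 2) (Fin 2) ℝ)
    (hH : ∀ wv : Fin 2 → ℝ, H wv =
      (a + ![p1, p2] ⬝ᵥ wv) • A - vecMulVec (A.mulVec wv + ![q1, q2]) ![p1, p2])
    (F : (Fin 2 → ℝ) → Matrix (Fin 2) (Fin 2) ℝ)
    (hF : ∀ wv : Fin 2 → ℝ, F wv =
      (γ * (a + ![p1, p2] ⬝ᵥ wv) ^ 2)⁻¹ • ((H wv)⁻¹ * Λ * H wv))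
    (w z : ℝ × ℝ → ℝ) (hw : ContDiff ℝ (⊤ : ℕ∞) w) (hz : ContDiff ℝ (⊤ : ℕ∞) z)
    (hden : ∀ p : ℝ × ℝ, a + p1 * pdx w p + p2 * pdx z p ≠ 0)
    (hHinv : ∀ p : ℝ × ℝ, IsUnit (H ![pdx w p, pdx z p]).det)
    (heq1 : ∀ p : ℝ × ℝ, pdt w p =
      F ![pdx w p, pdx z p] 0 0 * pdxx w p + F ![pdx w p, pdx z p] 0 1 * pdxx z p)
    (heq2 : ∀ p : ℝ × ℝ, pdt z p =
      F ![pdx w p, pdx z p] 1 0 * pdxx w p + F ![pdx w p, pdx z p] 1 1 * pdxx z p)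
    (Φ : ℝ × ℝ → ℝ × ℝ)
    (hΦ : Φ = fun p => (a * p.1 + p1 * w p + p2 * z p, p.2 / γ))
    (Φinv : ℝ × ℝ → ℝ × ℝ)
    (hl : Function.LeftInverse Φinv Φ) (hr : Function.RightInverse Φinv Φ)
    (hΦinv : ContDiff ℝ (⊤ : ℕ∞) Φinv)
    (w' z' : ℝ × ℝ → ℝ)
    (hw' : ∀ p : ℝ × ℝ, w' (Φ p) = q1 * p.1 + a1 * w p + a2 * z p)
    (hz' : ∀ p : ℝ × ℝ, z' (Φ p) = q2 * p.1 + a3 * w p + a4 * z p) :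
    (∀ p : ℝ × ℝ, pdt w' p = μ1 * pdxx w' p + μ2 * pdxx z' p) ∧
    (∀ p : ℝ × ℝ, pdt z' p = μ3 * pdxx w' p + μ4 * pdxx z' p) := by
  -- basic facts about Φinv
  have hinv2 : ∀ y s : ℝ, (Φinv (y, s)).2 = γ * s := by
    intro y s
    have h := congrArg Prod.snd (hr (y, s))
    rw [hΦ] at h
    simp only at h
    field_simp at h
    linarith [h]
  have hinv1 : ∀ y s : ℝ, a * (Φinv (y, s)).1 + p1 * w (Φinv (y, s)) + p2 * z (Φinv (y, s)) = y := by
    intro y s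
    have h := congrArg Prod.fst (hr (y, s))
    rw [hΦ] at h
    simpa using h
  have key : ∀ x0 t0 : ℝ,
      (pdt w' (Φ (x0, t0)) = μ1 * pdxx w' (Φ (x0, t0)) + μ2 * pdxx z' (Φ (x0, t0))) ∧
      (pdt z' (Φ (x0, t0)) = μ3 * pdxx w' (Φ (x0, t0)) + μ4 * pdxx z' (Φ (x0, t0))) := by
    intro x0 t0
    set X0 : ℝ := a * x0 + p1 * w (x0, t0) + p2 * z (x0, t0) with hX0
    set s0 : ℝ := t0 / γ with hs0
    have hΦp : Φ (x0, t0) = (X0, s0) := by rw [hΦ]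
    have hts : γ * s0 = t0 := by rw [hs0]; field_simp
    have hinvX0 : Φinv (X0, s0) = (x0, t0) := by rw [← hΦp]; exact hl (x0, t0)
    -- the spatial inverse function ψ
    set ψ : ℝ → ℝ := fun y => (Φinv (y, s0)).1 with hψdef
    have hψpair : ∀ y : ℝ, Φinv (y, s0) = (ψ y, t0) := by
      intro y
      exact Prod.ext rfl (by rw [hinv2 y s0, hts])
    have hψX0 : ψ X0 = x0 := by rw [hψdef]; simp [hinvX0]
    have hψsmooth : ContDiff ℝ (⊤ : ℕ∞) ψ :=
      contDiff_fst.comp (hΦinv.comp (contDiff_id.prodMk contDiff_const))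
    have hψdiff : ∀ y : ℝ, HasDerivAt ψ (deriv ψ y) y :=
      fun y => ((hψsmooth.differentiable (by simp)) y).hasDerivAt
    have hφψ : ∀ y : ℝ, a * ψ y + p1 * w (ψ y, t0) + p2 * z (ψ y, t0) = y := by
      intro y
      have h := hinv1 y s0
      rw [hψpair y] at h
      simpa using h
    -- derivative of the forward spatial map
    have hφ' : ∀ x : ℝ, HasDerivAt (fun x => a * x + p1 * w (x, t0) + p2 * z (x, t0))
        (a + p1 * pdx w (x, t0) + p2 * pdx z (x, t0)) x := by
      intro x
      have h1 := hasDerivAt_slice_x_s6 hw x t0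
      have h2 := hasDerivAt_slice_x_s6 hz x t0
      exact ((((hasDerivAt_id' x).const_mul a).add (h1.const_mul p1)).add
        (h2.const_mul p2)).congr_deriv (by ring)
    have hψ' : ∀ y : ℝ, deriv ψ y = (a + p1 * pdx w (ψ y, t0) + p2 * pdx z (ψ y, t0))⁻¹ := by
      intro y
      have hcomp := (hφ' (ψ y)).comp y (hψdiff y)
      have hid : ((fun x => a * x + p1 * w (x, t0) + p2 * z (x, t0)) ∘ ψ) = id := by
        funext y'
        simp [Function.comp, hφψ y']
      rw [hid] at hcomp
      have h1 : (a + p1 * pdx w (ψ y, t0) + p2 * pdx z (ψ y, t0)) * deriv ψ y = 1 :=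
        hcomp.unique (hasDerivAt_id y)
      have hne := hden (ψ y, t0)
      field_simp
      linear_combination h1
    -- slices of w' and z' at time s0
    have hw's : ∀ y : ℝ, w' (y, s0) = q1 * ψ y + a1 * w (ψ y, t0) + a2 * z (ψ y, t0) := by
      intro y
      have h := hw' (Φinv (y, s0))
      rw [hr (y, s0), hψpair y] at h
      simpa using h
    have hz's : ∀ y : ℝ, z' (y, s0) = q2 * ψ y + a3 * w (ψ y, t0) + a4 * z (ψ y, t0) := by
      intro y
      have h := hz' (Φinv (y, s0))
      rw [hr (y, s0), hψpair y] at h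
      simpa using h
    -- first spatial derivatives of w', z'
    have hpdxw' : ∀ y : ℝ, pdx w' (y, s0) =
        (q1 + a1 * pdx w (ψ y, t0) + a2 * pdx z (ψ y, t0)) *
          (a + p1 * pdx w (ψ y, t0) + p2 * pdx z (ψ y, t0))⁻¹ := by
      intro y
      have h1 : HasDerivAt (fun y' => w (ψ y', t0)) (pdx w (ψ y, t0) * deriv ψ y) y := by
        have := (hasDerivAt_slice_x_s6 hw (ψ y) t0).comp y (hψdiff y)
        simpa [Function.comp_def] using this
      have h2 : HasDerivAt (fun y' => z (ψ y', t0)) (pdx z (ψ y, t0) * deriv ψ y) y := by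
        have := (hasDerivAt_slice_x_s6 hz (ψ y) t0).comp y (hψdiff y)
        simpa [Function.comp_def] using this
      have h3 : HasDerivAt (fun y' => w' (y', s0))
          ((q1 + a1 * pdx w (ψ y, t0) + a2 * pdx z (ψ y, t0)) * deriv ψ y) y := by
        have hfun : (fun y' => w' (y', s0)) =
            fun y' => q1 * ψ y' + a1 * w (ψ y', t0) + a2 * z (ψ y', t0) := funext hw's
        rw [hfun]
        exact ((((hψdiff y).const_mul q1).add (h1.const_mul a1)).add
          (h2.const_mul a2)).congr_deriv (by ring)
      have := h3.deriv
      rw [show pdx w' (y, s0) = deriv (fun y' => w' (y', s0)) y from rfl, this, hψ' y]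
    have hpdxz' : ∀ y : ℝ, pdx z' (y, s0) =
        (q2 + a3 * pdx w (ψ y, t0) + a4 * pdx z (ψ y, t0)) *
          (a + p1 * pdx w (ψ y, t0) + p2 * pdx z (ψ y, t0))⁻¹ := by
      intro y
      have h1 : HasDerivAt (fun y' => w (ψ y', t0)) (pdx w (ψ y, t0) * deriv ψ y) y := by
        have := (hasDerivAt_slice_x_s6 hw (ψ y) t0).comp y (hψdiff y)
        simpa [Function.comp_def] using this
      have h2 : HasDerivAt (fun y' => z (ψ y', t0)) (pdx z (ψ y, t0) * deriv ψ y) y := by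
        have := (hasDerivAt_slice_x_s6 hz (ψ y) t0).comp y (hψdiff y)
        simpa [Function.comp_def] using this
      have h3 : HasDerivAt (fun y' => z' (y', s0))
          ((q2 + a3 * pdx w (ψ y, t0) + a4 * pdx z (ψ y, t0)) * deriv ψ y) y := by
        have hfun : (fun y' => z' (y', s0)) =
            fun y' => q2 * ψ y' + a3 * w (ψ y', t0) + a4 * z (ψ y', t0) := funext hz's
        rw [hfun]
        exact ((((hψdiff y).const_mul q2).add (h1.const_mul a3)).add
          (h2.const_mul a4)).congr_deriv (by ring)
      have := h3.deriv
      rw [show pdx z' (y, s0) = deriv (fun y' => z' (y', s0)) y from rfl, this, hψ' y]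

    -- abbreviate the denominator nonvanishing
    have hE : a + p1 * pdx w (x0, t0) + p2 * pdx z (x0, t0) ≠ 0 := hden (x0, t0)
    -- derivatives of the coefficient functions along x
    have hWx : HasDerivAt (fun x => q1 + a1 * pdx w (x, t0) + a2 * pdx z (x, t0))
        (a1 * pdxx w (x0, t0) + a2 * pdxx z (x0, t0)) x0 := by
      have h1 := hasDerivAt_slice_x_s6 (contDiff_pdx_s6 hw) x0 t0
      have h2 := hasDerivAt_slice_x_s6 (contDiff_pdx_s6 hz) x0 t0
      exact (((hasDerivAt_const x0 q1).add (h1.const_mul a1)).add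
        (h2.const_mul a2)).congr_deriv (by simp only [pdxx]; ring)
    have hZx : HasDerivAt (fun x => q2 + a3 * pdx w (x, t0) + a4 * pdx z (x, t0))
        (a3 * pdxx w (x0, t0) + a4 * pdxx z (x0, t0)) x0 := by
      have h1 := hasDerivAt_slice_x_s6 (contDiff_pdx_s6 hw) x0 t0
      have h2 := hasDerivAt_slice_x_s6 (contDiff_pdx_s6 hz) x0 t0
      exact (((hasDerivAt_const x0 q2).add (h1.const_mul a3)).add
        (h2.const_mul a4)).congr_deriv (by simp only [pdxx]; ring)
    have hDx : HasDerivAt (fun x => a + p1 * pdx w (x, t0) + p2 * pdx z (x, t0))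
        (p1 * pdxx w (x0, t0) + p2 * pdxx z (x0, t0)) x0 := by
      have h1 := hasDerivAt_slice_x_s6 (contDiff_pdx_s6 hw) x0 t0
      have h2 := hasDerivAt_slice_x_s6 (contDiff_pdx_s6 hz) x0 t0
      exact (((hasDerivAt_const x0 a).add (h1.const_mul p1)).add
        (h2.const_mul p2)).congr_deriv (by simp only [pdxx]; ring)
    -- second spatial derivative of w'
    have hxxw : pdxx w' (X0, s0) =
        ((a1 * pdxx w (x0, t0) + a2 * pdxx z (x0, t0)) *
            (a + p1 * pdx w (x0, t0) + p2 * pdx z (x0, t0)) -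
          (q1 + a1 * pdx w (x0, t0) + a2 * pdx z (x0, t0)) *
            (p1 * pdxx w (x0, t0) + p2 * pdxx z (x0, t0))) /
          (a + p1 * pdx w (x0, t0) + p2 * pdx z (x0, t0)) ^ 3 := by
      have hfun : (fun y => pdx w' (y, s0)) = fun y =>
          (q1 + a1 * pdx w (ψ y, t0) + a2 * pdx z (ψ y, t0)) *
            (a + p1 * pdx w (ψ y, t0) + p2 * pdx z (ψ y, t0))⁻¹ := funext hpdxw'
      have hWψ : HasDerivAt (fun y => q1 + a1 * pdx w (ψ y, t0) + a2 * pdx z (ψ y, t0))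
          ((a1 * pdxx w (x0, t0) + a2 * pdxx z (x0, t0)) * deriv ψ X0) X0 := by
        have h := hWx
        rw [← hψX0] at h
        have h' := h.comp X0 (hψdiff X0)
        simpa [Function.comp_def, hψX0] using h'
      have hDψ : HasDerivAt (fun y => a + p1 * pdx w (ψ y, t0) + p2 * pdx z (ψ y, t0))
          ((p1 * pdxx w (x0, t0) + p2 * pdxx z (x0, t0)) * deriv ψ X0) X0 := by
        have h := hDx
        rw [← hψX0] at h
        have h' := h.comp X0 (hψdiff X0)
        simpa [Function.comp_def, hψX0] using h'
      have hne : a + p1 * pdx w (ψ X0, t0) + p2 * pdx z (ψ X0, t0) ≠ 0 := by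
        rw [hψX0]; exact hE
      have hprod : HasDerivAt (fun y =>
          (q1 + a1 * pdx w (ψ y, t0) + a2 * pdx z (ψ y, t0)) *
            (a + p1 * pdx w (ψ y, t0) + p2 * pdx z (ψ y, t0))⁻¹)
          ((a1 * pdxx w (x0, t0) + a2 * pdxx z (x0, t0)) * deriv ψ X0 *
              (a + p1 * pdx w (ψ X0, t0) + p2 * pdx z (ψ X0, t0))⁻¹ +
            (q1 + a1 * pdx w (ψ X0, t0) + a2 * pdx z (ψ X0, t0)) *
              (-((p1 * pdxx w (x0, t0) + p2 * pdxx z (x0, t0)) * deriv ψ X0) /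
                (a + p1 * pdx w (ψ X0, t0) + p2 * pdx z (ψ X0, t0)) ^ 2)) X0 :=
        hWψ.mul (hDψ.inv hne)
      rw [← hfun] at hprod
      rw [show pdxx w' (X0, s0) = deriv (fun y => pdx w' (y, s0)) X0 from rfl, hprod.deriv,
        hψ' X0, hψX0]
      field_simp
      ring
    -- second spatial derivative of z'
    have hxxz : pdxx z' (X0, s0) =
        ((a3 * pdxx w (x0, t0) + a4 * pdxx z (x0, t0)) *
            (a + p1 * pdx w (x0, t0) + p2 * pdx z (x0, t0)) -
          (q2 + a3 * pdx w (x0, t0) + a4 * pdx z (x0, t0)) *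
            (p1 * pdxx w (x0, t0) + p2 * pdxx z (x0, t0))) /
          (a + p1 * pdx w (x0, t0) + p2 * pdx z (x0, t0)) ^ 3 := by
      have hfun : (fun y => pdx z' (y, s0)) = fun y =>
          (q2 + a3 * pdx w (ψ y, t0) + a4 * pdx z (ψ y, t0)) *
            (a + p1 * pdx w (ψ y, t0) + p2 * pdx z (ψ y, t0))⁻¹ := funext hpdxz'
      have hZψ : HasDerivAt (fun y => q2 + a3 * pdx w (ψ y, t0) + a4 * pdx z (ψ y, t0))
          ((a3 * pdxx w (x0, t0) + a4 * pdxx z (x0, t0)) * deriv ψ X0) X0 := by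
        have h := hZx
        rw [← hψX0] at h
        have h' := h.comp X0 (hψdiff X0)
        simpa [Function.comp_def, hψX0] using h'
      have hDψ : HasDerivAt (fun y => a + p1 * pdx w (ψ y, t0) + p2 * pdx z (ψ y, t0))
          ((p1 * pdxx w (x0, t0) + p2 * pdxx z (x0, t0)) * deriv ψ X0) X0 := by
        have h := hDx
        rw [← hψX0] at h
        have h' := h.comp X0 (hψdiff X0)
        simpa [Function.comp_def, hψX0] using h'
      have hne : a + p1 * pdx w (ψ X0, t0) + p2 * pdx z (ψ X0, t0) ≠ 0 := by
        rw [hψX0]; exact hE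
      have hprod : HasDerivAt (fun y =>
          (q2 + a3 * pdx w (ψ y, t0) + a4 * pdx z (ψ y, t0)) *
            (a + p1 * pdx w (ψ y, t0) + p2 * pdx z (ψ y, t0))⁻¹)
          ((a3 * pdxx w (x0, t0) + a4 * pdxx z (x0, t0)) * deriv ψ X0 *
              (a + p1 * pdx w (ψ X0, t0) + p2 * pdx z (ψ X0, t0))⁻¹ +
            (q2 + a3 * pdx w (ψ X0, t0) + a4 * pdx z (ψ X0, t0)) *
              (-((p1 * pdxx w (x0, t0) + p2 * pdxx z (x0, t0)) * deriv ψ X0) /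
                (a + p1 * pdx w (ψ X0, t0) + p2 * pdx z (ψ X0, t0)) ^ 2)) X0 :=
        hZψ.mul (hDψ.inv hne)
      rw [← hfun] at hprod
      rw [show pdxx z' (X0, s0) = deriv (fun y => pdx z' (y, s0)) X0 from rfl, hprod.deriv,
        hψ' X0, hψX0]
      field_simp
      ring
    -- the time curve
    set α : ℝ → ℝ := fun s => (Φinv (X0, s)).1 with hαdef
    have hαpair : ∀ s : ℝ, Φinv (X0, s) = (α s, γ * s) := by
      intro s
      exact Prod.ext rfl (hinv2 X0 s)
    have hαs0 : α s0 = x0 := by rw [hαdef]; simp [hinvX0]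
    have hαsmooth : ContDiff ℝ (⊤ : ℕ∞) α :=
      contDiff_fst.comp (hΦinv.comp (contDiff_const.prodMk contDiff_id))
    have hαdiff : HasDerivAt α (deriv α s0) s0 :=
      ((hαsmooth.differentiable (by simp)) s0).hasDerivAt
    have hγl : HasDerivAt (fun s : ℝ => γ * s) γ s0 := by
      simpa using (hasDerivAt_id' s0).const_mul γ
    have hwcurve : HasDerivAt (fun s => w (α s, γ * s))
        (pdx w (x0, t0) * deriv α s0 + pdt w (x0, t0) * γ) s0 := by
      have h0 := hasDerivAt_comp2 hw hαdiff hγl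
      simp only [hαs0, hts] at h0
      exact h0
    have hzcurve : HasDerivAt (fun s => z (α s, γ * s))
        (pdx z (x0, t0) * deriv α s0 + pdt z (x0, t0) * γ) s0 := by
      have h0 := hasDerivAt_comp2 hz hαdiff hγl
      simp only [hαs0, hts] at h0
      exact h0
    -- the constraint from the first coordinate of Φ ∘ Φinv = id
    have hC : a * deriv α s0 +
        p1 * (pdx w (x0, t0) * deriv α s0 + pdt w (x0, t0) * γ) +
        p2 * (pdx z (x0, t0) * deriv α s0 + pdt z (x0, t0) * γ) = 0 := by
      have hconst : HasDerivAt
          (fun s : ℝ => a * α s + p1 * w (α s, γ * s) + p2 * z (α s, γ * s))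
          (a * deriv α s0 +
            p1 * (pdx w (x0, t0) * deriv α s0 + pdt w (x0, t0) * γ) +
            p2 * (pdx z (x0, t0) * deriv α s0 + pdt z (x0, t0) * γ)) s0 :=
        ((hαdiff.const_mul a).add (hwcurve.const_mul p1)).add (hzcurve.const_mul p2)
      have hconstfun : (fun s : ℝ => a * α s + p1 * w (α s, γ * s) + p2 * z (α s, γ * s)) =
          fun _ => X0 := by
        funext s
        have h := hinv1 X0 s
        rw [hαpair s] at h
        simpa using h
      rw [hconstfun] at hconst
      exact hconst.unique (hasDerivAt_const s0 X0)
    -- time derivatives of w' and z'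
    have hw't : pdt w' (X0, s0) = q1 * deriv α s0 +
        a1 * (pdx w (x0, t0) * deriv α s0 + pdt w (x0, t0) * γ) +
        a2 * (pdx z (x0, t0) * deriv α s0 + pdt z (x0, t0) * γ) := by
      have hfun : (fun s => w' (X0, s)) =
          fun s => q1 * α s + a1 * w (α s, γ * s) + a2 * z (α s, γ * s) := by
        funext s
        have h := hw' (Φinv (X0, s))
        rw [hr (X0, s), hαpair s] at h
        simpa using h
      have hD : HasDerivAt (fun s => q1 * α s + a1 * w (α s, γ * s) + a2 * z (α s, γ * s))
          (q1 * deriv α s0 +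
            a1 * (pdx w (x0, t0) * deriv α s0 + pdt w (x0, t0) * γ) +
            a2 * (pdx z (x0, t0) * deriv α s0 + pdt z (x0, t0) * γ)) s0 :=
        ((hαdiff.const_mul q1).add (hwcurve.const_mul a1)).add (hzcurve.const_mul a2)
      rw [show pdt w' (X0, s0) = deriv (fun s => w' (X0, s)) s0 from rfl, hfun]
      exact hD.deriv
    have hz't : pdt z' (X0, s0) = q2 * deriv α s0 +
        a3 * (pdx w (x0, t0) * deriv α s0 + pdt w (x0, t0) * γ) +
        a4 * (pdx z (x0, t0) * deriv α s0 + pdt z (x0, t0) * γ) := by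
      have hfun : (fun s => z' (X0, s)) =
          fun s => q2 * α s + a3 * w (α s, γ * s) + a4 * z (α s, γ * s) := by
        funext s
        have h := hz' (Φinv (X0, s))
        rw [hr (X0, s), hαpair s] at h
        simpa using h
      have hD : HasDerivAt (fun s => q2 * α s + a3 * w (α s, γ * s) + a4 * z (α s, γ * s))
          (q2 * deriv α s0 +
            a3 * (pdx w (x0, t0) * deriv α s0 + pdt w (x0, t0) * γ) +
            a4 * (pdx z (x0, t0) * deriv α s0 + pdt z (x0, t0) * γ)) s0 :=
        ((hαdiff.const_mul q2).add (hwcurve.const_mul a3)).add (hzcurve.const_mul a4)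
      rw [show pdt z' (X0, s0) = deriv (fun s => z' (X0, s)) s0 from rfl, hfun]
      exact hD.deriv
    -- matrix algebra
    set u : Fin 2 → ℝ := ![pdx w (x0, t0), pdx z (x0, t0)] with hu
    have hdot : a + ![p1, p2] ⬝ᵥ u = a + p1 * pdx w (x0, t0) + p2 * pdx z (x0, t0) := by
      rw [hu]
      simp [dotProduct, Fin.sum_univ_two]
      ring
    have hc0 : γ * (a + ![p1, p2] ⬝ᵥ u) ^ 2 ≠ 0 := by
      rw [hdot]; exact mul_ne_zero hγ (pow_ne_zero 2 hE)
    have hmat : H u * ((γ * (a + ![p1, p2] ⬝ᵥ u) ^ 2) • F u) = Λ * H u := by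
      rw [hF u, smul_smul, mul_inv_cancel₀ hc0, one_smul, ← Matrix.mul_assoc,
        ← Matrix.mul_assoc, Matrix.mul_nonsing_inv _ (hHinv (x0, t0)), Matrix.one_mul]
    rw [hdot] at hmat
    have e00 := congrFun (congrFun hmat 0) 0
    have e01 := congrFun (congrFun hmat 0) 1
    have e10 := congrFun (congrFun hmat 1) 0
    have e11 := congrFun (congrFun hmat 1) 1
    simp [Matrix.mul_apply, Fin.sum_univ_two, Matrix.smul_apply, smul_eq_mul,
      hΛ] at e00 e01 e10 e11
    have hh00 : H u 0 0 = (a + p1 * pdx w (x0, t0) + p2 * pdx z (x0, t0)) * a1 -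
        (q1 + a1 * pdx w (x0, t0) + a2 * pdx z (x0, t0)) * p1 := by
      rw [hH u, hu, hA]
      simp [Matrix.sub_apply, Matrix.smul_apply, Matrix.vecMulVec_apply, Matrix.mulVec,
        dotProduct, Fin.sum_univ_two, smul_eq_mul, Pi.add_apply, Matrix.vecHead,
        Matrix.vecTail, Function.comp, Pi.smul_apply]
      ring
    have hh01 : H u 0 1 = (a + p1 * pdx w (x0, t0) + p2 * pdx z (x0, t0)) * a2 -
        (q1 + a1 * pdx w (x0, t0) + a2 * pdx z (x0, t0)) * p2 := by
      rw [hH u, hu, hA]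
      simp [Matrix.sub_apply, Matrix.smul_apply, Matrix.vecMulVec_apply, Matrix.mulVec,
        dotProduct, Fin.sum_univ_two, smul_eq_mul, Pi.add_apply, Matrix.vecHead,
        Matrix.vecTail, Function.comp, Pi.smul_apply]
      ring
    have hh10 : H u 1 0 = (a + p1 * pdx w (x0, t0) + p2 * pdx z (x0, t0)) * a3 -
        (q2 + a3 * pdx w (x0, t0) + a4 * pdx z (x0, t0)) * p1 := by
      rw [hH u, hu, hA]
      simp [Matrix.sub_apply, Matrix.smul_apply, Matrix.vecMulVec_apply, Matrix.mulVec,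
        dotProduct, Fin.sum_univ_two, smul_eq_mul, Pi.add_apply, Matrix.vecHead,
        Matrix.vecTail, Function.comp, Pi.smul_apply]
      ring
    have hh11 : H u 1 1 = (a + p1 * pdx w (x0, t0) + p2 * pdx z (x0, t0)) * a4 -
        (q2 + a3 * pdx w (x0, t0) + a4 * pdx z (x0, t0)) * p2 := by
      rw [hH u, hu, hA]
      simp [Matrix.sub_apply, Matrix.smul_apply, Matrix.vecMulVec_apply, Matrix.mulVec,
        dotProduct, Fin.sum_univ_two, smul_eq_mul, Pi.add_apply, Matrix.vecHead,
        Matrix.vecTail, Function.comp, Pi.smul_apply]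
      ring
    have heqw := heq1 (x0, t0)
    have heqz := heq2 (x0, t0)
    rw [← hu] at heqw heqz
    -- final algebra
    constructor
    · rw [hΦp, hw't, hxxw, hxxz, ← mul_div_assoc, ← mul_div_assoc, ← add_div,
        eq_div_iff (pow_ne_zero 3 hE)]
      linear_combination
        ((a + p1 * pdx w (x0, t0) + p2 * pdx z (x0, t0)) ^ 2 *
          (q1 + a1 * pdx w (x0, t0) + a2 * pdx z (x0, t0))) * hC +
        (γ * (a + p1 * pdx w (x0, t0) + p2 * pdx z (x0, t0)) ^ 2 * H u 0 0) * heqw +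
        (γ * (a + p1 * pdx w (x0, t0) + p2 * pdx z (x0, t0)) ^ 2 * H u 0 1) * heqz +
        pdxx w (x0, t0) * e00 + pdxx z (x0, t0) * e01 +
        (μ1 * pdxx w (x0, t0) -
          γ * (a + p1 * pdx w (x0, t0) + p2 * pdx z (x0, t0)) ^ 2 * pdt w (x0, t0)) * hh00 +
        (μ1 * pdxx z (x0, t0) -
          γ * (a + p1 * pdx w (x0, t0) + p2 * pdx z (x0, t0)) ^ 2 * pdt z (x0, t0)) * hh01 +
        (μ2 * pdxx w (x0, t0)) * hh10 + (μ2 * pdxx z (x0, t0)) * hh11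
    · rw [hΦp, hz't, hxxw, hxxz, ← mul_div_assoc, ← mul_div_assoc, ← add_div,
        eq_div_iff (pow_ne_zero 3 hE)]
      linear_combination
        ((a + p1 * pdx w (x0, t0) + p2 * pdx z (x0, t0)) ^ 2 *
          (q2 + a3 * pdx w (x0, t0) + a4 * pdx z (x0, t0))) * hC +
        (γ * (a + p1 * pdx w (x0, t0) + p2 * pdx z (x0, t0)) ^ 2 * H u 1 0) * heqw +
        (γ * (a + p1 * pdx w (x0, t0) + p2 * pdx z (x0, t0)) ^ 2 * H u 1 1) * heqz +
        pdxx w (x0, t0) * e10 + pdxx z (x0, t0) * e11 +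
        (μ3 * pdxx w (x0, t0)) * hh00 + (μ3 * pdxx z (x0, t0)) * hh01 +
        (μ4 * pdxx w (x0, t0) -
          γ * (a + p1 * pdx w (x0, t0) + p2 * pdx z (x0, t0)) ^ 2 * pdt w (x0, t0)) * hh10 +
        (μ4 * pdxx z (x0, t0) -
          γ * (a + p1 * pdx w (x0, t0) + p2 * pdx z (x0, t0)) ^ 2 * pdt z (x0, t0)) * hh11
  constructor
  · intro q
    rw [← hr q]
    exact (key (Φinv q).1 (Φinv q).2).1
  · intro q
    rw [← hr q]
    exact (key (Φinv q).1 (Φinv q).2).2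
end
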